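/- arXiv:2509.13260 — 6 statements merged into one kernel-verified Lean document; each statement's English description precedes it below -/
import Mathlib

section
/- Let H be a real Hilbert space, K ⊆ H a nonempty closed convex set, and proj : H → H a map satisfying proj(x) ∈ K and ⟨x − proj(x), y − proj(x)⟩ ≤ 0 for all x ∈ H and y ∈ K. Let F : H → ℝ be Fréchet differentiable with gradient G : H → H, let L > 0, and assume for all X, Y ∈ K both the smoothness bound F(Y) ≤ F(X) + ⟨G(X), Y − X⟩ + (L/2)‖Y − X‖² and the convexity bound F(Y) ≥ F(X) + ⟨G(X), Y − X⟩. Let X_opt ∈ K satisfy F(X_opt) ≤ F(Y) for all Y ∈ K. Fix h ∈ (0, 1/L], X₀ ∈ K, and define X_{n+1} = proj(X_n − h·G(X_n)). Then for every integer n ≥ 1, F(X_n) − F(X_opt) ≤ ‖X₀ − X_opt‖² / (2nh). -/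
open scoped RealInnerProductSpace

/-- **Convex rate of convergence for projected gradient descent in a Hilbert space.**
If `F` is `L`-smooth and convex on the nonempty closed convex set `K`, `X_opt ∈ K` is a
minimizer of `F` on `K`, and `0 < h ≤ 1/L`, then the PGD iterates
`X (n+1) = proj (X n - h • G (X n))` satisfy
`F (X n) - F X_opt ≤ ‖X 0 - X_opt‖² / (2 n h)` for every `n ≥ 1`. -/
theorem stmt_2 {H : Type*} [NormedAddCommGroup H] [InnerProductSpace ℝ H] [CompleteSpace H]
    (K : Set H) (hKne : K.Nonempty) (hKclosed : IsClosed K) (hKconv : Convex ℝ K)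
    (proj : H → H)
    (hprojK : ∀ x, proj x ∈ K)
    (hproj : ∀ x, ∀ y ∈ K, ⟪x - proj x, y - proj x⟫ ≤ 0)
    (F : H → ℝ) (G : H → H)
    (hdiff : ∀ X, HasFDerivAt F (innerSL ℝ (G X)) X)
    (L : ℝ) (hL : 0 < L)
    (hsmooth : ∀ X ∈ K, ∀ Y ∈ K,
      F Y ≤ F X + ⟪G X, Y - X⟫ + L / 2 * ‖Y - X‖ ^ 2)
    (hconvex : ∀ X ∈ K, ∀ Y ∈ K,
      F X + ⟪G X, Y - X⟫ ≤ F Y)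
    (Xopt : H) (hXoptK : Xopt ∈ K) (hXopt : ∀ Y ∈ K, F Xopt ≤ F Y)
    (h : ℝ) (hh0 : 0 < h) (hhL : h ≤ 1 / L)
    (X : ℕ → H) (hX0 : X 0 ∈ K)
    (hXrec : ∀ n, X (n + 1) = proj (X n - h • G (X n))) :
    ∀ n : ℕ, 1 ≤ n →
      F (X n) - F Xopt ≤ ‖X 0 - Xopt‖ ^ 2 / (2 * n * h) := by
  have hXK : ∀ n, X n ∈ K := by
    intro n
    induction n with
    | zero => exact hX0
    | succ k ih => rw [hXrec]; exact hprojK _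
  have hLh : L * h ≤ 1 := by
    have := mul_le_mul_of_nonneg_left hhL (le_of_lt hL)
    rwa [mul_one_div, div_self (ne_of_gt hL)] at this
  -- key one-step inequality
  have key : ∀ n, ∀ y ∈ K, F (X (n + 1)) - F y ≤
      (‖X n - y‖ ^ 2 - ‖X (n + 1) - y‖ ^ 2) / (2 * h) := by
    intro n y hy
    set x := X n with hx
    set x' := X (n + 1) with hx'
    set g := G x with hg
    -- projection variational inequality
    have hp : ⟪(x - h • g) - x', y - x'⟫ ≤ 0 := by
      rw [hx', hXrec]; exact hproj _ y hy
    have hrw : (x - h • g) - x' = (x - x') - h • g := by abel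
    rw [hrw, inner_sub_left, real_inner_smul_left] at hp
    have hip1 : ⟪x - x', y - x'⟫ = -⟪x - x', x' - y⟫ := by
      rw [← inner_neg_right]; congr 1; abel
    have hip2 : ⟪g, y - x'⟫ = -⟪g, x' - y⟫ := by
      rw [← inner_neg_right]; congr 1; abel
    rw [hip1, hip2] at hp
    -- so h * ⟪g, x' - y⟫ ≤ ⟪x - x', x' - y⟫
    have hp' : h * ⟪g, x' - y⟫ ≤ ⟪x - x', x' - y⟫ := by linarith
    have hsm := hsmooth x (hXK n) x' (hXK (n + 1))
    have hcv := hconvex x (hXK n) y hy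
    have hlin : ⟪g, x' - x⟫ + ⟪g, x - y⟫ = ⟪g, x' - y⟫ := by
      simp only [inner_sub_right]; ring
    have hlin2 : ⟪g, y - x⟫ = -⟪g, x - y⟫ := by
      rw [← inner_neg_right]; congr 1; abel
    have pol : ‖x - y‖ ^ 2
        = ‖x - x'‖ ^ 2 + 2 * ⟪x - x', x' - y⟫ + ‖x' - y‖ ^ 2 := by
      have hh := norm_add_sq_real (x - x') (x' - y)
      rw [show (x - x') + (x' - y) = x - y by abel] at hh
      linarith
    have hnn : ‖x' - x‖ = ‖x - x'‖ := norm_sub_rev _ _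
    have hd : (0 : ℝ) ≤ ‖x - x'‖ ^ 2 := by positivity
    -- combine: F x' - F y ≤ ⟪g, x' - y⟫ + L/2 * ‖x - x'‖^2
    have hb1 : F x' - F y ≤ ⟪g, x' - y⟫ + L / 2 * ‖x - x'‖ ^ 2 := by
      rw [hnn] at hsm
      rw [hlin2] at hcv
      linarith
    rw [le_div_iff₀ (by positivity : (0 : ℝ) < 2 * h)]
    have hb2 : (F x' - F y) * (2 * h) ≤ (⟪g, x' - y⟫ + L / 2 * ‖x - x'‖ ^ 2) * (2 * h) :=
      mul_le_mul_of_nonneg_right hb1 (by positivity)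
    have hLd : L * h * ‖x - x'‖ ^ 2 ≤ 1 * ‖x - x'‖ ^ 2 :=
      mul_le_mul_of_nonneg_right hLh hd
    nlinarith [hp', hb2, hLd]
  have mono : ∀ n, F (X (n + 1)) ≤ F (X n) := by
    intro n
    have hk := key n (X n) (hXK n)
    have h0 : ‖X n - X n‖ = 0 := by simp
    have hnum : ‖X n - X n‖ ^ 2 - ‖X (n + 1) - X n‖ ^ 2 ≤ 0 := by
      rw [h0]; nlinarith [norm_nonneg (X (n + 1) - X n)]
    have : (‖X n - X n‖ ^ 2 - ‖X (n + 1) - X n‖ ^ 2) / (2 * h) ≤ 0 :=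
      div_nonpos_of_nonpos_of_nonneg hnum (by positivity)
    linarith
  have tele : ∀ n : ℕ, (n : ℝ) * (F (X n) - F Xopt) ≤
      (‖X 0 - Xopt‖ ^ 2 - ‖X n - Xopt‖ ^ 2) / (2 * h) := by
    intro n
    induction n with
    | zero => simp
    | succ k ih =>
      have hs := key k Xopt hXoptK
      have hm := mono k
      have hkc : (0 : ℝ) ≤ (k : ℝ) := Nat.cast_nonneg k
      have h1 : (k : ℝ) * (F (X (k + 1)) - F Xopt) ≤ (k : ℝ) * (F (X k) - F Xopt) :=
        mul_le_mul_of_nonneg_left (by linarith) hkc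
      have h2 : ((k + 1 : ℕ) : ℝ) * (F (X (k + 1)) - F Xopt)
          = (k : ℝ) * (F (X (k + 1)) - F Xopt) + (F (X (k + 1)) - F Xopt) := by
        push_cast; ring
      have h3 : (‖X 0 - Xopt‖ ^ 2 - ‖X k - Xopt‖ ^ 2) / (2 * h)
          + (‖X k - Xopt‖ ^ 2 - ‖X (k + 1) - Xopt‖ ^ 2) / (2 * h)
          = (‖X 0 - Xopt‖ ^ 2 - ‖X (k + 1) - Xopt‖ ^ 2) / (2 * h) := by
        ring
      rw [h2]
      linarith
  intro n hn
  have hnpos : (0 : ℝ) < (n : ℝ) := by exact_mod_cast Nat.lt_of_lt_of_le Nat.zero_lt_one hn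
  have ht := tele n
  have hB : (0 : ℝ) ≤ ‖X n - Xopt‖ ^ 2 := by positivity
  have hsplit : (‖X 0 - Xopt‖ ^ 2 - ‖X n - Xopt‖ ^ 2) / (2 * h)
      = ‖X 0 - Xopt‖ ^ 2 / (2 * h) - ‖X n - Xopt‖ ^ 2 / (2 * h) := by ring
  have hBd : (0 : ℝ) ≤ ‖X n - Xopt‖ ^ 2 / (2 * h) := by positivity
  have hmain : (n : ℝ) * (F (X n) - F Xopt) ≤ ‖X 0 - Xopt‖ ^ 2 / (2 * h) := by
    rw [hsplit] at ht; linarith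
  have heq : ‖X 0 - Xopt‖ ^ 2 / (2 * (n : ℝ) * h)
      = (‖X 0 - Xopt‖ ^ 2 / (2 * h)) / (n : ℝ) := by
    rw [div_div]; congr 1; ring
  rw [heq, le_div_iff₀ hnpos]
  linarith [hmain, mul_comm (F (X n) - F Xopt) (n : ℝ)]
end

section
/- Let d ≥ 1, m ∈ ℕ, and let U : ℝ^d → ℝ be C^∞ and V₀ : ℝ^d → ℝ be C^{m+2}, with constants M > 0 and M₀ > 0 such that ⟨Hess U(x)·v, v⟩ ≤ M‖v‖² and ⟨Hess V₀(x)·v, v⟩ ≥ −M₀‖v‖² for all x, v ∈ ℝ^d. Let h ∈ (0, 1/(M+M₀)) and T₀(x) = x + h∇V₀(x) − h∇U(x). Then T₀ is a bijection of ℝ^d onto ℝ^d, its Jacobian J_{T₀}(x) = I + h·Hess V₀(x) − h·Hess U(x) is positive definite at every x, and the inverse map T₀⁻¹ : ℝ^d → ℝ^d is C^{m+1}. -/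
open scoped RealInnerProductSpace

set_option maxHeartbeats 1000000 in
lemma stmt_6_aux {E : Type*} [NormedAddCommGroup E] [InnerProductSpace ℝ E]
    [FiniteDimensional ℝ E] (m : ℕ)
    (U V₀ : E → ℝ)
    (hU : ContDiff ℝ (⊤ : ℕ∞) U) (hV₀ : ContDiff ℝ (m + 2) V₀)
    (M M₀ : ℝ) (hM : 0 < M) (hM₀ : 0 < M₀)
    (hHessU : ∀ x v : E, ⟪fderiv ℝ (gradient U) x v, v⟫ ≤ M * ‖v‖ ^ 2)
    (hHessV₀ : ∀ x v : E, -M₀ * ‖v‖ ^ 2 ≤ ⟪fderiv ℝ (gradient V₀) x v, v⟫)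
    (h : ℝ) (hh0 : 0 < h) (hh : h < 1 / (M + M₀))
    (T₀ : E → E)
    (hT₀ : ∀ x, T₀ x = x + h • gradient V₀ x - h • gradient U x) :
    Function.Bijective T₀ ∧
    (∀ x, (∀ v, fderiv ℝ T₀ x v
        = v + h • fderiv ℝ (gradient V₀) x v - h • fderiv ℝ (gradient U) x v) ∧
      ∀ v, v ≠ 0 → 0 < ⟪fderiv ℝ T₀ x v, v⟫) ∧
    ContDiff ℝ (m + 1) (Function.invFun T₀) := by
  have hMM : 0 < M + M₀ := by linarith
  set c : ℝ := 1 - h * (M + M₀) with hc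
  have hcpos : 0 < c := by
    have : h * (M + M₀) < 1 := by
      rw [lt_div_iff₀ hMM] at hh; linarith
    simp only [hc]; linarith
  -- smoothness of gradients
  have hVg : ContDiff ℝ (m + 1) (gradient V₀) := by
    have h1 : ContDiff ℝ (m + 1) (fderiv ℝ V₀) :=
      hV₀.fderiv_right (le_of_eq (by push_cast; ring))
    exact ((InnerProductSpace.toDual ℝ E).symm.contDiff).comp h1
  have hUg : ContDiff ℝ (m + 1) (gradient U) := by
    have h1 : ContDiff ℝ (m + 1) (fderiv ℝ U) := hU.fderiv_right (by exact_mod_cast le_top)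
    exact ((InnerProductSpace.toDual ℝ E).symm.contDiff).comp h1
  have hm1 : (1 : WithTop ℕ∞) ≤ (m : WithTop ℕ∞) + 1 := le_add_self
  have hm1' : (m : WithTop ℕ∞) + 1 ≠ 0 := ne_of_gt (lt_of_lt_of_le zero_lt_one hm1)
  have hVd : Differentiable ℝ (gradient V₀) := hVg.differentiable hm1'
  have hUd : Differentiable ℝ (gradient U) := hUg.differentiable hm1'
  -- T₀ is C^{m+1}
  have hTfun : T₀ = fun x => x + h • gradient V₀ x - h • gradient U x := funext hT₀
  have hTc : ContDiff ℝ (m + 1) T₀ := by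
    rw [hTfun]
    exact (contDiff_id.add (hVg.const_smul h)).sub (hUg.const_smul h)
  -- Jacobian
  set L : E → (E →L[ℝ] E) := fun x =>
    ContinuousLinearMap.id ℝ E + h • fderiv ℝ (gradient V₀) x - h • fderiv ℝ (gradient U) x
    with hL
  have hDT : ∀ x, HasFDerivAt T₀ (L x) x := by
    intro x
    rw [hTfun]
    exact ((hasFDerivAt_id x).add ((hVd x).hasFDerivAt.const_smul h)).sub
      ((hUd x).hasFDerivAt.const_smul h)
  have hfderiv : ∀ x, fderiv ℝ T₀ x = L x := fun x => (hDT x).fderiv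
  -- positive definiteness
  have hpos : ∀ x v, c * ‖v‖ ^ 2 ≤ ⟪L x v, v⟫ := by
    intro x v
    have hLv : L x v = v + h • fderiv ℝ (gradient V₀) x v - h • fderiv ℝ (gradient U) x v := by
      simp [hL]
    rw [hLv, inner_sub_left, inner_add_left, real_inner_smul_left, real_inner_smul_left,
      real_inner_self_eq_norm_sq]
    have h1 := hHessV₀ x v
    have h2 := hHessU x v
    nlinarith [mul_le_mul_of_nonneg_left h2 hh0.le, mul_le_mul_of_nonneg_left h1 hh0.le]
  -- strong monotonicity
  have hmono : ∀ x y, c * ‖x - y‖ ^ 2 ≤ ⟪T₀ x - T₀ y, x - y⟫ := by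
    intro x y
    set w := x - y with hw
    set ψ : ℝ → ℝ := fun t => ⟪w, T₀ (y + t • w)⟫ - c * ‖w‖ ^ 2 * t with hψ
    have hder : ∀ t, HasDerivAt ψ (⟪w, L (y + t • w) w⟫ - c * ‖w‖ ^ 2) t := by
      intro t
      have hγ : HasDerivAt (fun t : ℝ => y + t • w) w t := by
        simpa using ((hasDerivAt_id t).smul_const w).const_add y
      have h1 : HasDerivAt (fun t : ℝ => T₀ (y + t • w)) (L (y + t • w) w) t :=
        (hDT (y + t • w)).comp_hasDerivAt t hγ
      have h2 : HasDerivAt (fun t : ℝ => ⟪w, T₀ (y + t • w)⟫)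
          (⟪w, L (y + t • w) w⟫) t := by
        exact ((innerSL ℝ w).hasFDerivAt.comp_hasDerivAt t h1)
      have h3 := h2.sub ((hasDerivAt_id t).const_mul (c * ‖w‖ ^ 2)); rw [mul_one] at h3; exact h3
    have hmonoψ : Monotone ψ := by
      apply monotone_of_deriv_nonneg (fun t => (hder t).differentiableAt)
      intro t
      rw [(hder t).deriv]
      have := hpos (y + t • w) w
      rw [real_inner_comm] at this
      linarith
    have h01 := hmonoψ (le_of_lt one_pos : (0:ℝ) ≤ 1)
    simp only [hψ, zero_smul, add_zero, one_smul, mul_one, mul_zero, sub_zero] at h01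
    have hyx : y + w = x := by simp [hw]
    rw [hyx] at h01
    rw [inner_sub_left]
    have e1 := real_inner_comm w (T₀ x)
    have e2 := real_inner_comm w (T₀ y)
    linarith
  -- injectivity
  have hinj : Function.Injective T₀ := by
    intro x y hxy
    have h1 := hmono x y
    rw [hxy, sub_self, inner_zero_left] at h1
    have h2 : ‖x - y‖ ^ 2 ≤ 0 :=
      (mul_le_mul_iff_right₀ hcpos).mp (by linarith : c * ‖x - y‖ ^ 2 ≤ c * 0)
    have h3 : ‖x - y‖ ^ 2 = 0 := le_antisymm h2 (sq_nonneg _)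
    have h4 : ‖x - y‖ = 0 := (pow_eq_zero_iff two_ne_zero).mp h3
    rwa [norm_sub_eq_zero_iff] at h4
  -- expansiveness
  have hexp : ∀ x y, c * ‖x - y‖ ≤ ‖T₀ x - T₀ y‖ := by
    intro x y
    rcases eq_or_ne x y with rfl | hne
    · simp
    · have h1 := hmono x y
      have h2 : ⟪T₀ x - T₀ y, x - y⟫ ≤ ‖T₀ x - T₀ y‖ * ‖x - y‖ := real_inner_le_norm _ _
      have h3 : 0 < ‖x - y‖ := by
        rw [norm_pos_iff, sub_ne_zero]; exact hne
      have h4 := le_trans h1 h2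
      rw [pow_two] at h4
      nlinarith
  -- derivative is injective, hence an equivalence
  have hLinj : ∀ x, Function.Injective (L x) := by
    intro x v w hvw
    have h0 : L x (v - w) = 0 := by rw [map_sub, hvw, sub_self]
    have h1 := hpos x (v - w)
    rw [h0, inner_zero_left] at h1
    have h2 : ‖v - w‖ ^ 2 ≤ 0 :=
      (mul_le_mul_iff_right₀ hcpos).mp (by linarith : c * ‖v - w‖ ^ 2 ≤ c * 0)
    have h3 : ‖v - w‖ = 0 := (pow_eq_zero_iff two_ne_zero).mp (le_antisymm h2 (sq_nonneg _))
    rwa [norm_sub_eq_zero_iff] at h3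
  have hequiv : ∀ x, ∃ e : E ≃L[ℝ] E, (e : E →L[ℝ] E) = L x := by
    intro x
    have hbij : Function.Bijective ((L x) : E →ₗ[ℝ] E) :=
      ⟨hLinj x, LinearMap.injective_iff_surjective.mp (hLinj x)⟩
    exact ⟨(LinearEquiv.ofBijective ((L x) : E →ₗ[ℝ] E) hbij).toContinuousLinearEquiv, by
      ext v; rfl⟩
  -- strict derivative
  have hstrict : ∀ x, HasStrictFDerivAt T₀ (L x) x := by
    intro x
    have := hTc.contDiffAt.hasStrictFDerivAt (x := x) hm1'
    rwa [hfderiv x] at this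
  -- range is open
  have hopen : IsOpen (Set.range T₀) := by
    rw [isOpen_iff_mem_nhds]
    rintro _ ⟨x, rfl⟩
    obtain ⟨e, he⟩ := hequiv x
    have hmap : Filter.map T₀ (nhds x) = nhds (T₀ x) := by
      have hs := hstrict x; rw [← he] at hs
      exact hs.map_nhds_eq_of_equiv
    rw [← hmap, Filter.mem_map]
    filter_upwards with z using ⟨z, rfl⟩
  -- range is closed
  have hclosed : IsClosed (Set.range T₀) := by
    apply IsSeqClosed.isClosed
    intro u p hu hup
    choose x hx using hu
    have hcau : CauchySeq u := hup.cauchySeq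
    have hcx : CauchySeq x := by
      rw [Metric.cauchySeq_iff] at hcau ⊢
      intro ε hε
      obtain ⟨N, hN⟩ := hcau (c * ε) (by positivity)
      refine ⟨N, fun a ha b hb => ?_⟩
      have h1 := hexp (x a) (x b)
      rw [hx a, hx b] at h1
      have h2 := hN a ha b hb
      rw [dist_eq_norm] at h2 ⊢
      nlinarith
    obtain ⟨q, hq⟩ := cauchySeq_tendsto_of_complete hcx
    refine ⟨q, ?_⟩
    have h1 : Filter.Tendsto (fun n => T₀ (x n)) Filter.atTop (nhds (T₀ q)) :=
      (hTc.continuous.continuousAt.tendsto).comp hq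
    simp only [hx] at h1
    exact tendsto_nhds_unique h1 hup
  -- surjectivity
  have hsurj : Function.Surjective T₀ := by
    have hne : (Set.range T₀).Nonempty := ⟨T₀ 0, 0, rfl⟩
    have huniv := IsClopen.eq_univ ⟨hclosed, hopen⟩ hne
    intro y
    have : y ∈ Set.range T₀ := huniv ▸ Set.mem_univ y
    exact this
  refine ⟨⟨hinj, hsurj⟩, fun x => ⟨fun v => by rw [hfderiv x]; simp [hL], fun v hv => ?_⟩, ?_⟩
  · rw [hfderiv x]
    have := hpos x v
    have hv2 : 0 < ‖v‖ ^ 2 := by have := norm_pos_iff.mpr hv; positivity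
    nlinarith
  -- smoothness of the inverse
  · rw [contDiff_iff_contDiffAt]
    intro y
    set x := Function.invFun T₀ y with hxdef
    have hxy : T₀ x = y := Function.invFun_eq (hsurj y)
    obtain ⟨e, he⟩ := hequiv x
    have hf' : HasFDerivAt T₀ ((e : E →L[ℝ] E)) x := by rw [he]; exact hDT x
    have hloc := hTc.contDiffAt.to_localInverse (f' := e) hf' hm1'
    set g := hTc.contDiffAt.localInverse hf' hm1' with hg
    have hright : ∀ᶠ z in nhds (T₀ x), T₀ (g z) = z :=
      (hTc.contDiffAt.hasStrictFDerivAt' hf' hm1').eventually_right_inverse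
    have heq : Function.invFun T₀ =ᶠ[nhds (T₀ x)] g := by
      filter_upwards [hright] with z hz
      conv_lhs => rw [← hz]
      exact Function.leftInverse_invFun hinj (g z)
    rw [← hxy]
    exact hloc.congr_of_eventuallyEq heq

/-- **Invertibility and regularity of the forward-Euler map.** If `U` is `C^∞`, `V₀` is
`C^{m+2}`, `Hess U ⪯ M I`, `Hess V₀ ⪰ -M₀ I`, and `0 < h < 1/(M + M₀)`, then
`T₀ x = x + h ∇V₀ x - h ∇U x` is a bijection of `ℝ^d`, its Jacobian
`I + h Hess V₀ - h Hess U` is positive definite everywhere, and `T₀⁻¹` is `C^{m+1}`. -/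
theorem stmt_6 {d : ℕ} (hd : 1 ≤ d) (m : ℕ)
    (U V₀ : EuclideanSpace ℝ (Fin d) → ℝ)
    (hU : ContDiff ℝ (⊤ : ℕ∞) U) (hV₀ : ContDiff ℝ (m + 2) V₀)
    (M M₀ : ℝ) (hM : 0 < M) (hM₀ : 0 < M₀)
    (hHessU : ∀ x v : EuclideanSpace ℝ (Fin d),
      ⟪fderiv ℝ (gradient U) x v, v⟫ ≤ M * ‖v‖ ^ 2)
    (hHessV₀ : ∀ x v : EuclideanSpace ℝ (Fin d),
      -M₀ * ‖v‖ ^ 2 ≤ ⟪fderiv ℝ (gradient V₀) x v, v⟫)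
    (h : ℝ) (hh0 : 0 < h) (hh : h < 1 / (M + M₀))
    (T₀ : EuclideanSpace ℝ (Fin d) → EuclideanSpace ℝ (Fin d))
    (hT₀ : ∀ x, T₀ x = x + h • gradient V₀ x - h • gradient U x) :
    Function.Bijective T₀ ∧
    (∀ x, (∀ v, fderiv ℝ T₀ x v
        = v + h • fderiv ℝ (gradient V₀) x v - h • fderiv ℝ (gradient U) x v) ∧
      ∀ v, v ≠ 0 → 0 < ⟪fderiv ℝ T₀ x v, v⟫) ∧
    ContDiff ℝ (m + 1) (Function.invFun T₀) :=
  stmt_6_aux m U V₀ hU hV₀ M M₀ hM hM₀ hHessU hHessV₀ h hh0 hh T₀ hT₀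
end

section
/- Let h > 0, let γ be the standard Gaussian probability measure on ℝ (mean 0, variance 1), and let T : ℝ → ℝ be T(x) = x − h·x³. Then there is no continuous function g : ℝ → ℝ such that the pushforward measure T_#γ equals the measure with Lebesgue density g (i.e., such that (T_#γ)(A) = ∫_A g(x) dx for all Borel sets A). In other words, T_#γ is absolutely continuous but admits no continuous density: its density has a jump at the point r = (2/3)·√(1/(3h)), with left limit +∞ and finite right limit. -/
open MeasureTheory ProbabilityTheory Set

/-- **The forward-Euler pushforward of the Gaussian has no continuous density.**
For `T x = x - h x³` and the standard Gaussian `γ`, the pushforward `T_#γ` is absolutely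
continuous with respect to Lebesgue measure, yet there is no continuous function
`g : ℝ → ℝ` whose associated density measure equals `T_#γ`. -/
theorem stmt_10 (h : ℝ) (hh : 0 < h)
    (T : ℝ → ℝ) (hT : ∀ x, T x = x - h * x ^ 3) :
    Measure.map T (gaussianReal 0 1) ≪ (volume : Measure ℝ) ∧
    ¬∃ g : ℝ → ℝ, Continuous g ∧
      Measure.map T (gaussianReal 0 1)
        = volume.withDensity fun x => ENNReal.ofReal (g x) := by
  have hTe : T = fun x => x - h * x ^ 3 := funext hT
  subst hTe
  set T : ℝ → ℝ := fun x => x - h * x ^ 3 with hTdef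
  -- derivative
  have hd : ∀ x : ℝ, HasDerivAt T (1 - 3 * h * x ^ 2) x := by
    intro x
    have h1 : HasDerivAt (fun x : ℝ => x - h * x ^ 3)
        (1 - h * (↑3 * x ^ (3 - 1))) x :=
      (hasDerivAt_id x).sub ((hasDerivAt_pow 3 x).const_mul h)
    have h2 : (1 : ℝ) - h * (↑3 * x ^ (3 - 1)) = 1 - 3 * h * x ^ 2 := by
      norm_num; ring
    exact h2 ▸ h1
  have hcont : Continuous T := by fun_prop
  have hTmeas : Measurable T := hcont.measurable
  -- critical point
  set c : ℝ := Real.sqrt (1 / (3 * h)) with hcdef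
  have hc : 0 < c := Real.sqrt_pos.mpr (by positivity)
  have hc2 : 3 * h * c ^ 2 = 1 := by
    have : c ^ 2 = 1 / (3 * h) := Real.sq_sqrt (by positivity)
    rw [this]; field_simp
  -- monotonicity
  have hmono : StrictMonoOn T (Icc (-c) c) := by
    apply strictMonoOn_of_deriv_pos (convex_Icc _ _) hcont.continuousOn
    intro x hx
    rw [interior_Icc] at hx
    rw [(hd x).deriv]
    have hx2 : x ^ 2 < c ^ 2 := sq_lt_sq' hx.1 hx.2
    nlinarith
  have hanti1 : StrictAntiOn T (Ici c) := by
    apply strictAntiOn_of_deriv_neg (convex_Ici _) hcont.continuousOn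
    intro x hx
    rw [interior_Ici] at hx
    rw [(hd x).deriv]
    have : c < x := hx
    nlinarith
  have hanti2 : StrictAntiOn T (Iic (-c)) := by
    apply strictAntiOn_of_deriv_neg (convex_Iic _) hcont.continuousOn
    intro x hx
    rw [interior_Iic] at hx
    rw [(hd x).deriv]
    have : x < -c := hx
    nlinarith
  -- key null lemma
  have key : ∀ s : Set ℝ, MeasurableSet s → Set.InjOn T s →
      (∀ x ∈ s, 1 - 3 * h * x ^ 2 ≠ 0) → volume (T '' s) = 0 → volume s = 0 := by
    intro s hs hinj hne h0
    have hint := MeasureTheory.lintegral_abs_det_fderiv_eq_addHaar_image volume hs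
      (f' := fun x => ContinuousLinearMap.smulRight (1 : ℝ →L[ℝ] ℝ) (1 - 3 * h * x ^ 2))
      (fun x _ => ((hd x).hasDerivWithinAt).hasFDerivWithinAt) hinj
    rw [h0] at hint
    simp only [ContinuousLinearMap.smulRight_one_eq_toSpanSingleton, ContinuousLinearMap.det_toSpanSingleton] at hint
    have hmeasf : Measurable fun x : ℝ => ENNReal.ofReal |1 - 3 * h * x ^ 2| := by
      fun_prop
    have hae := (setLIntegral_eq_zero_iff hs hmeasf).mp hint
    rw [MeasureTheory.ae_iff] at hae
    refine measure_mono_null (fun x hx => ?_) hae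
    simp only [Set.mem_setOf_eq, not_forall]
    refine ⟨hx, ?_⟩
    exact (ENNReal.ofReal_pos.mpr (abs_pos.mpr (hne x hx))).ne'
  constructor
  · -- absolute continuity
    refine Measure.AbsolutelyContinuous.mk fun A hA hA0 => ?_
    rw [Measure.map_apply hTmeas hA]
    refine gaussianReal_absolutelyContinuous 0 one_ne_zero ?_
    have hsub : T ⁻¹' A ⊆ ((T ⁻¹' A ∩ Ioo (-c) c) ∪ (T ⁻¹' A ∩ Ioi c) ∪
        (T ⁻¹' A ∩ Iio (-c))) ∪ {-c, c} := by
      intro x hx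
      rcases lt_trichotomy x (-c) with h1 | h1 | h1
      · exact Or.inl (Or.inr ⟨hx, h1⟩)
      · exact Or.inr (by simp [h1])
      · rcases lt_trichotomy x c with h2 | h2 | h2
        · exact Or.inl (Or.inl (Or.inl ⟨hx, h1, h2⟩))
        · exact Or.inr (by simp [h2])
        · exact Or.inl (Or.inl (Or.inr ⟨hx, h2⟩))
    refine measure_mono_null hsub (measure_union_null ?_ ?_)
    · have himg : ∀ s : Set ℝ, volume (T '' (T ⁻¹' A ∩ s)) = 0 := fun s =>
        measure_mono_null (fun y ⟨x, hx, hxy⟩ => hxy ▸ hx.1) hA0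
      have hpA : MeasurableSet (T ⁻¹' A) := hTmeas hA
      refine measure_union_null (measure_union_null ?_ ?_) ?_
      · refine key _ (hpA.inter measurableSet_Ioo)
          (hmono.injOn.mono (Set.inter_subset_right.trans Ioo_subset_Icc_self))
          (fun x hx => ?_) (himg _)
        have hx2 : x ^ 2 < c ^ 2 := sq_lt_sq' hx.2.1 hx.2.2
        nlinarith
      · refine key _ (hpA.inter measurableSet_Ioi)
          (hanti1.injOn.mono (Set.inter_subset_right.trans Ioi_subset_Ici_self))
          (fun x hx => ?_) (himg _)
        have : c < x := hx.2
        nlinarith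
      · refine key _ (hpA.inter measurableSet_Iio)
          (hanti2.injOn.mono (Set.inter_subset_right.trans Iio_subset_Iic_self))
          (fun x hx => ?_) (himg _)
        have : x < -c := hx.2
        nlinarith
    · exact (Set.toFinite ({-c, c} : Set ℝ)).measure_zero _
  · -- no continuous density
    rintro ⟨g, hg, hmap⟩
    set r : ℝ := T c with hrdef
    obtain ⟨M, hM⟩ := (isCompact_Icc (a := r - 1) (b := r)).exists_bound_of_continuousOn
      hg.continuousOn
    have hM0 : 0 ≤ M := le_trans (norm_nonneg _) (hM r ⟨by linarith, le_refl r⟩)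
    set K : ℝ := gaussianPDFReal 0 1 c with hKdef
    have hK : 0 < K := gaussianPDFReal_pos 0 1 c one_ne_zero
    set t : ℝ := min (min c 1) (min (1 / (3 * h * c + 1)) (K / (3 * M * h * c + 1)))
      with htdef
    have ht : 0 < t := by positivity
    have htc : t ≤ c := le_trans (min_le_left _ _) (min_le_left _ _)
    have ht1 : t ≤ 1 := le_trans (min_le_left _ _) (min_le_right _ _)
    have htA : t * (3 * h * c + 1) ≤ 1 := by
      have h1 : t ≤ 1 / (3 * h * c + 1) := (min_le_right _ _).trans (min_le_left _ _)
      rw [le_div_iff₀ (by positivity)] at h1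
      linarith
    have htB : t * (3 * M * h * c + 1) ≤ K := by
      have h1 : t ≤ K / (3 * M * h * c + 1) := (min_le_right _ _).trans (min_le_right _ _)
      rw [le_div_iff₀ (by positivity)] at h1
      linarith
    set ε : ℝ := 3 * h * c * t ^ 2 with hεdef
    have hε : 0 < ε := by positivity
    have hε1 : ε ≤ 1 := by nlinarith
    -- the preimage contains an interval near c
    have hsub : Ioo (c - t) c ⊆ T ⁻¹' Ioo (r - ε) r := by
      intro x hx
      have hx1 : c - t < x := hx.1
      have hx2 : x < c := hx.2
      have hxm : x ∈ Icc (-c) c := ⟨by linarith, hx2.le⟩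
      have hctm : c - t ∈ Icc (-c) c := ⟨by linarith, by linarith⟩
      have hcm : c ∈ Icc (-c) c := ⟨by linarith, le_refl c⟩
      constructor
      · have hlt : T (c - t) < T x := hmono hctm hxm hx1
        have halg : r - T (c - t) ≤ ε := by
          simp only [hrdef, hTdef]
          nlinarith [pow_pos ht 3]
        simp only [Set.mem_Ioo] at *
        linarith
      · exact hmono hxm hcm hx2
    -- lower bound on Gaussian measure of the small interval
    have hKbound : ∀ x ∈ Ioo (c - t) c, ENNReal.ofReal K ≤ gaussianPDF 0 1 x := by
      intro x hx
      refine ENNReal.ofReal_le_ofReal ?_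
      have hx2 : x ^ 2 ≤ c ^ 2 := sq_le_sq' (by linarith [hx.1]) hx.2.le
      simp only [hKdef, gaussianPDFReal, NNReal.coe_one, mul_one, sub_zero]
      gcongr
    have hlow : ENNReal.ofReal (K * t) ≤ gaussianReal 0 1 (Ioo (c - t) c) := by
      rw [gaussianReal_apply 0 one_ne_zero]
      calc ENNReal.ofReal (K * t) = ENNReal.ofReal K * volume (Ioo (c - t) c) := by
            rw [Real.volume_Ioo, ← ENNReal.ofReal_mul hK.le]
            ring_nf
          _ = ∫⁻ _ in Ioo (c - t) c, ENNReal.ofReal K := (setLIntegral_const _ _).symm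
          _ ≤ ∫⁻ x in Ioo (c - t) c, gaussianPDF 0 1 x :=
            setLIntegral_mono (measurable_gaussianPDF 0 1) hKbound
    -- upper bound from the continuous density
    have hup : (volume.withDensity fun x => ENNReal.ofReal (g x)) (Ioo (r - ε) r)
        ≤ ENNReal.ofReal (M * ε) := by
      rw [withDensity_apply _ measurableSet_Ioo]
      calc ∫⁻ x in Ioo (r - ε) r, ENNReal.ofReal (g x)
          ≤ ∫⁻ _ in Ioo (r - ε) r, ENNReal.ofReal M := by
            refine setLIntegral_mono measurable_const fun x hx => ?_
            refine ENNReal.ofReal_le_ofReal ?_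
            have hxI : x ∈ Icc (r - 1) r := ⟨by linarith [hx.1], hx.2.le⟩
            calc g x ≤ |g x| := le_abs_self _
              _ ≤ M := hM x hxI
        _ = ENNReal.ofReal M * volume (Ioo (r - ε) r) := setLIntegral_const _ _
        _ = ENNReal.ofReal (M * ε) := by
            rw [Real.volume_Ioo, ← ENNReal.ofReal_mul hM0]
            ring_nf
    -- combine
    have hchain : ENNReal.ofReal (K * t) ≤ ENNReal.ofReal (M * ε) := by
      calc ENNReal.ofReal (K * t) ≤ gaussianReal 0 1 (Ioo (c - t) c) := hlow
        _ ≤ gaussianReal 0 1 (T ⁻¹' Ioo (r - ε) r) := measure_mono hsub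
        _ = Measure.map T (gaussianReal 0 1) (Ioo (r - ε) r) :=
            (Measure.map_apply hTmeas measurableSet_Ioo).symm
        _ = (volume.withDensity fun x => ENNReal.ofReal (g x)) (Ioo (r - ε) r) := by
            rw [hmap]
        _ ≤ ENNReal.ofReal (M * ε) := hup
    have hreal : K * t ≤ M * ε :=
      (ENNReal.ofReal_le_ofReal_iff (by positivity)).mp hchain
    nlinarith [mul_le_mul_of_nonneg_right htB ht.le, mul_pos ht ht]
end

section
/- Define V₀ : ℝ → ℝ by V₀(x) = x²/2 for |x| < 1 and V₀(x) = |x| − 1/2 for |x| ≥ 1; let D₀ = ∫_ℝ exp(−V₀(x)) dx, and let μ₀ be the measure on ℝ with Lebesgue density p₀(x) = (1/D₀)·exp(−V₀(x)). Let h ∈ (0, 1) and define T₀ : ℝ → ℝ by T₀(x) = x for |x| ≤ 1 and T₀(x) = (1−h)x + h·sgn(x) for |x| ≥ 1. Then the pushforward measure (T₀)_#μ₀ equals the measure with Lebesgue density p₁, where p₁(x) = (1/D₀)·exp(−x²/2) for |x| < 1 and p₁(x) = (1/(D₀(1−h)))·exp(−(|x| − h)/(1−h) + 1/2) for |x| ≥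 1. In particular, p₁ has jump discontinuities at x = ±1 for every h ∈ (0, 1). -/
open MeasureTheory Set

lemma my_lintegral_image {s : Set ℝ} {f f' : ℝ → ℝ} (hs : MeasurableSet s)
    (hf' : ∀ x ∈ s, HasDerivWithinAt f (f' x) s x) (hf : Set.InjOn f s) (g : ℝ → ENNReal) :
    ∫⁻ x in f '' s, g x = ∫⁻ x in s, ENNReal.ofReal |f' x| * g (f x) := by
  simpa only [ContinuousLinearMap.det_toSpanSingleton] using
    lintegral_image_eq_lintegral_abs_det_fderiv_mul volume hs
      (fun x hx => (hf' x hx).hasFDerivWithinAt) hf g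

lemma my_split3 (f : ℝ → ENNReal) (A : Set ℝ) :
    ∫⁻ x in A, f x = (∫⁻ x in A ∩ Set.Iic (-1), f x) + (∫⁻ x in A ∩ Set.Ioo (-1) 1, f x)
      + ∫⁻ x in A ∩ Set.Ici 1, f x := by
  have h1 := lintegral_inter_add_diff (μ := volume) f A (measurableSet_Iic (a := (-1:ℝ)))
  have h2 := lintegral_inter_add_diff (μ := volume) f (A \ Set.Iic (-1))
    (measurableSet_Iio (a := (1:ℝ)))
  have e1 : (A \ Set.Iic (-1)) ∩ Set.Iio 1 = A ∩ Set.Ioo (-1) 1 := by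
    ext x; simp only [mem_diff, mem_inter_iff, mem_Iic, mem_Iio, mem_Ioo, not_le]; tauto
  have e2 : (A \ Set.Iic (-1)) \ Set.Iio 1 = A ∩ Set.Ici 1 := by
    ext x
    simp only [mem_diff, mem_inter_iff, mem_Iic, mem_Iio, mem_Ici, not_le, not_lt]
    constructor
    · rintro ⟨⟨hxA, _⟩, h2⟩; exact ⟨hxA, h2⟩
    · rintro ⟨hxA, h2⟩; exact ⟨⟨hxA, by linarith⟩, h2⟩
  rw [← h1, ← h2, e1, e2]; rw [add_assoc]

lemma my_exp_negabs_integrable : Integrable (fun x : ℝ => Real.exp (-|x|)) := by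
  rw [← integrableOn_univ, ← Set.Iic_union_Ioi (a := (0:ℝ))]
  apply IntegrableOn.union
  · exact (integrableOn_exp_Iic 0).congr_fun
      (fun x hx => by simp [abs_of_nonpos (mem_Iic.1 hx)]) measurableSet_Iic
  · exact (exp_neg_integrableOn_Ioi 0 one_pos).congr_fun
      (fun x hx => by simp [abs_of_pos (mem_Ioi.1 hx)]) measurableSet_Ioi

/-- **Example 2, one forward-Euler step.** With `V₀ x = x²/2` on `(-1,1)` and `|x| - 1/2`
outside, `D₀ = ∫ exp (-V₀)`, `μ₀` the measure with density `p₀ = exp (-V₀)/D₀`, and the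
forward-Euler map `T₀ x = x` for `|x| ≤ 1`, `T₀ x = (1-h) x + h sgn x` for `|x| ≥ 1`, the
pushforward `(T₀)_# μ₀` has the displayed density `p₁`, which is discontinuous at `±1`. -/
theorem stmt_11 (h : ℝ) (hh : 0 < h) (hh1 : h < 1)
    (V₀ : ℝ → ℝ)
    (hV₀ : ∀ x, V₀ x = if |x| < 1 then x ^ 2 / 2 else |x| - 1 / 2)
    (D₀ : ℝ) (hD₀ : D₀ = ∫ x : ℝ, Real.exp (-V₀ x))
    (μ₀ : Measure ℝ)
    (hμ₀ : μ₀ = volume.withDensity fun x =>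
      ENNReal.ofReal (1 / D₀ * Real.exp (-V₀ x)))
    (T₀ : ℝ → ℝ)
    (hT₀ : ∀ x, T₀ x = if |x| ≤ 1 then x else (1 - h) * x + h * Real.sign x)
    (p₁ : ℝ → ℝ)
    (hp₁ : ∀ x, p₁ x =
      if |x| < 1 then 1 / D₀ * Real.exp (-x ^ 2 / 2)
      else 1 / (D₀ * (1 - h)) * Real.exp (-((|x| - h) / (1 - h)) + 1 / 2)) :
    Measure.map T₀ μ₀ = volume.withDensity (fun x => ENNReal.ofReal (p₁ x)) ∧
    ¬ContinuousAt p₁ 1 ∧ ¬ContinuousAt p₁ (-1) := by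
  have h1h : (0:ℝ) < 1 - h := by linarith
  have h1h' : (1:ℝ) - h ≠ 0 := ne_of_gt h1h
  -- V₀ is measurable
  have hVfun : V₀ = fun x => if |x| < 1 then x ^ 2 / 2 else |x| - 1 / 2 := funext hV₀
  have hV : Measurable V₀ := by
    rw [hVfun]
    exact Measurable.ite (measurableSet_lt continuous_abs.measurable measurable_const)
      (by fun_prop) (by fun_prop)
  -- D₀ > 0
  have hint : Integrable (fun x => Real.exp (-V₀ x)) := by
    apply Integrable.mono' (my_exp_negabs_integrable.const_mul (Real.exp (1/2)))
      (hV.neg.exp.aestronglyMeasurable)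
    filter_upwards with x
    rw [Real.norm_eq_abs, abs_of_pos (Real.exp_pos _), ← Real.exp_add]
    apply Real.exp_le_exp.2
    rw [Pi.neg_apply, hV₀]
    rcases lt_or_ge (|x|) 1 with hx | hx
    · rw [if_pos hx]; nlinarith [abs_nonneg x, sq_abs x]
    · rw [if_neg (not_lt.2 hx)]; linarith
  have hD₀pos : 0 < D₀ := by
    rw [hD₀]
    rw [integral_pos_iff_support_of_nonneg (fun x => (Real.exp_pos _).le) hint]
    have : Function.support (fun x => Real.exp (-V₀ x)) = Set.univ := by
      ext x; simp [Function.mem_support, (Real.exp_pos _).ne']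
    rw [this]
    simp
  have hD₀ne : D₀ ≠ 0 := ne_of_gt hD₀pos
  -- T₀ on the pieces
  have hTmid : ∀ x : ℝ, |x| ≤ 1 → T₀ x = x := fun x hx => by rw [hT₀, if_pos hx]
  have hTr : ∀ x : ℝ, 1 ≤ x → T₀ x = (1 - h) * x + h := by
    intro x hx
    rcases hx.eq_or_lt with rfl | hx'
    · rw [hTmid 1 (by norm_num)]; ring
    · rw [hT₀, if_neg (by rw [abs_of_pos (by linarith)]; linarith),
        Real.sign_of_pos (by linarith)]
      ring
  have hTl : ∀ x : ℝ, x ≤ -1 → T₀ x = (1 - h) * x - h := by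
    intro x hx
    rcases eq_or_lt_of_le hx with hxe | hx'
    · rw [hxe, hTmid (-1) (by rw [abs_of_neg (by norm_num)]; norm_num)]; ring
    · rw [hT₀, if_neg (by rw [abs_of_neg (by linarith)]; linarith),
        Real.sign_of_neg (by linarith)]
      ring
  -- T₀ measurable
  have hsign : Measurable Real.sign := by
    have : Real.sign = fun r : ℝ => if r < 0 then (-1:ℝ) else if 0 < r then 1 else 0 := rfl
    rw [this]
    exact Measurable.ite (measurableSet_lt measurable_id measurable_const) measurable_const
      (Measurable.ite (measurableSet_lt measurable_const measurable_id) measurable_const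
        measurable_const)
  have hT : Measurable T₀ := by
    have : T₀ = fun x => if |x| ≤ 1 then x else (1 - h) * x + h * Real.sign x := funext hT₀
    rw [this]
    exact Measurable.ite (measurableSet_le continuous_abs.measurable measurable_const)
      measurable_id ((measurable_id.const_mul _).add (hsign.const_mul _))
  refine ⟨?_, ?_, ?_⟩
  · -- the pushforward identity
    refine Measure.ext fun A hA => ?_
    rw [Measure.map_apply hT hA, hμ₀, withDensity_apply _ (hT hA), withDensity_apply _ hA,
      my_split3 _ (T₀ ⁻¹' A), my_split3 _ A]
    -- middle piece
    have hmidset : T₀ ⁻¹' A ∩ Set.Ioo (-1) 1 = A ∩ Set.Ioo (-1) 1 := by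
      ext x
      simp only [mem_inter_iff, mem_preimage, mem_Ioo]
      constructor
      · rintro ⟨hxA, hx1, hx2⟩
        rw [hTmid x (abs_le.2 ⟨hx1.le, hx2.le⟩)] at hxA
        exact ⟨hxA, hx1, hx2⟩
      · rintro ⟨hxA, hx1, hx2⟩
        refine ⟨?_, hx1, hx2⟩
        show T₀ x ∈ A
        rw [hTmid x (abs_le.2 ⟨hx1.le, hx2.le⟩)]
        exact hxA
    have hmid : ∫⁻ x in T₀ ⁻¹' A ∩ Set.Ioo (-1) 1,
        ENNReal.ofReal (1 / D₀ * Real.exp (-V₀ x))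
        = ∫⁻ x in A ∩ Set.Ioo (-1) 1, ENNReal.ofReal (p₁ x) := by
      rw [hmidset]
      apply setLIntegral_congr_fun (hA.inter measurableSet_Ioo)
      intro x hx; beta_reduce
      have hxlt : |x| < 1 := abs_lt.2 ⟨hx.2.1, hx.2.2⟩
      rw [hp₁, if_pos hxlt, hV₀, if_pos hxlt, neg_div]
    -- right piece
    have hsR : MeasurableSet (T₀ ⁻¹' A ∩ Set.Ici 1) := (hT hA).inter measurableSet_Ici
    have hderR : ∀ x ∈ T₀ ⁻¹' A ∩ Set.Ici 1,
        HasDerivWithinAt T₀ ((fun _ : ℝ => 1 - h) x) (T₀ ⁻¹' A ∩ Set.Ici 1) x := by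
      intro x hx
      have haff : HasDerivWithinAt (fun y : ℝ => (1 - h) * y + h) (1 - h)
          (T₀ ⁻¹' A ∩ Set.Ici 1) x := by
        simpa using (((hasDerivAt_id x).const_mul (1 - h)).add_const h).hasDerivWithinAt
      exact haff.congr (fun y hy => hTr y hy.2) (hTr x hx.2)
    have hinjR : Set.InjOn T₀ (T₀ ⁻¹' A ∩ Set.Ici 1) := by
      intro a ha b hb hab
      rw [hTr a ha.2, hTr b hb.2] at hab
      have : (1 - h) * a = (1 - h) * b := by linarith
      exact mul_left_cancel₀ h1h' this
    have himgR : T₀ '' (T₀ ⁻¹' A ∩ Set.Ici 1) = A ∩ Set.Ici 1 := by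
      ext y
      constructor
      · rintro ⟨x, ⟨hxA, hx1⟩, rfl⟩
        refine ⟨hxA, ?_⟩
        rw [hTr x hx1]
        rw [mem_Ici] at hx1 ⊢
        nlinarith
      · rintro ⟨hyA, hy1⟩
        rw [mem_Ici] at hy1
        have hx1 : (1:ℝ) ≤ (y - h) / (1 - h) := by
          rw [le_div_iff₀ h1h]; linarith
        have hTx : T₀ ((y - h) / (1 - h)) = y := by
          rw [hTr _ hx1]; field_simp; ring
        exact ⟨(y - h) / (1 - h), ⟨by rw [mem_preimage, hTx]; exact hyA, hx1⟩, hTx⟩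
    have hright : ∫⁻ x in T₀ ⁻¹' A ∩ Set.Ici 1,
        ENNReal.ofReal (1 / D₀ * Real.exp (-V₀ x))
        = ∫⁻ x in A ∩ Set.Ici 1, ENNReal.ofReal (p₁ x) := by
      rw [← himgR, my_lintegral_image hsR hderR hinjR]
      apply setLIntegral_congr_fun hsR
      intro x hx; beta_reduce
      have hx1 : (1:ℝ) ≤ x := hx.2
      have hy1 : (1:ℝ) ≤ (1 - h) * x + h := by nlinarith
      rw [hTr x hx1, hp₁, if_neg (by rw [abs_of_pos (by linarith)]; linarith),
        abs_of_pos (by linarith : (0:ℝ) < (1 - h) * x + h),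
        show ((1 - h) * x + h - h) / (1 - h) = x by field_simp; ring,
        hV₀, if_neg (by rw [abs_of_pos (by linarith)]; linarith),
        abs_of_pos (by linarith : (0:ℝ) < x), abs_of_pos h1h,
        ← ENNReal.ofReal_mul h1h.le]
      congr 1
      rw [show -(x - 1/2) = -x + 1/2 by ring]
      field_simp
    -- left piece
    have hsL : MeasurableSet (T₀ ⁻¹' A ∩ Set.Iic (-1)) := (hT hA).inter measurableSet_Iic
    have hderL : ∀ x ∈ T₀ ⁻¹' A ∩ Set.Iic (-1),
        HasDerivWithinAt T₀ ((fun _ : ℝ => 1 - h) x) (T₀ ⁻¹' A ∩ Set.Iic (-1)) x := by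
      intro x hx
      have haff : HasDerivWithinAt (fun y : ℝ => (1 - h) * y - h) (1 - h)
          (T₀ ⁻¹' A ∩ Set.Iic (-1)) x := by
        simpa using (((hasDerivAt_id x).const_mul (1 - h)).sub_const h).hasDerivWithinAt
      exact haff.congr (fun y hy => hTl y hy.2) (hTl x hx.2)
    have hinjL : Set.InjOn T₀ (T₀ ⁻¹' A ∩ Set.Iic (-1)) := by
      intro a ha b hb hab
      rw [hTl a ha.2, hTl b hb.2] at hab
      have : (1 - h) * a = (1 - h) * b := by linarith
      exact mul_left_cancel₀ h1h' this
    have himgL : T₀ '' (T₀ ⁻¹' A ∩ Set.Iic (-1)) = A ∩ Set.Iic (-1) := by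
      ext y
      constructor
      · rintro ⟨x, ⟨hxA, hx1⟩, rfl⟩
        refine ⟨hxA, ?_⟩
        rw [hTl x hx1]
        rw [mem_Iic] at hx1 ⊢
        nlinarith
      · rintro ⟨hyA, hy1⟩
        rw [mem_Iic] at hy1
        have hx1 : (y + h) / (1 - h) ≤ -1 := by
          rw [div_le_iff₀ h1h]; linarith
        have hTx : T₀ ((y + h) / (1 - h)) = y := by
          rw [hTl _ hx1]; field_simp; ring
        exact ⟨(y + h) / (1 - h), ⟨by rw [mem_preimage, hTx]; exact hyA, hx1⟩, hTx⟩
    have hleft : ∫⁻ x in T₀ ⁻¹' A ∩ Set.Iic (-1),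
        ENNReal.ofReal (1 / D₀ * Real.exp (-V₀ x))
        = ∫⁻ x in A ∩ Set.Iic (-1), ENNReal.ofReal (p₁ x) := by
      rw [← himgL, my_lintegral_image hsL hderL hinjL]
      apply setLIntegral_congr_fun hsL
      intro x hx; beta_reduce
      have hx1 : x ≤ (-1:ℝ) := hx.2
      have hy1 : (1 - h) * x - h ≤ -1 := by nlinarith
      rw [hTl x hx1, hp₁, if_neg (by rw [abs_of_neg (by linarith)]; linarith),
        abs_of_neg (by linarith : (1 - h) * x - h < 0),
        show (-((1 - h) * x - h) - h) / (1 - h) = -x by field_simp; ring,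
        hV₀, if_neg (by rw [abs_of_neg (by linarith)]; linarith),
        abs_of_neg (by linarith : x < (0:ℝ)), abs_of_pos h1h,
        ← ENNReal.ofReal_mul h1h.le]
      congr 1
      rw [show -(-x - 1/2) = -(-x) + 1/2 by ring]
      field_simp
    rw [hmid, hright, hleft]
  · -- discontinuity at 1
    intro hc
    have h1 : Filter.Tendsto p₁ (nhdsWithin 1 (Set.Iio 1)) (nhds (p₁ 1)) :=
      hc.tendsto.mono_left nhdsWithin_le_nhds
    have h2 : Filter.Tendsto p₁ (nhdsWithin 1 (Set.Iio 1))
        (nhds (1 / D₀ * Real.exp (-(1:ℝ) ^ 2 / 2))) := by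
      have hq : Filter.Tendsto (fun x : ℝ => 1 / D₀ * Real.exp (-x ^ 2 / 2))
          (nhdsWithin 1 (Set.Iio 1)) (nhds (1 / D₀ * Real.exp (-(1:ℝ) ^ 2 / 2))) := by
        apply Filter.Tendsto.mono_left _ nhdsWithin_le_nhds
        exact (Continuous.continuousAt (by fun_prop)).tendsto
      apply hq.congr'
      filter_upwards [Ioo_mem_nhdsLT_of_mem (by norm_num : (1:ℝ) ∈ Set.Ioc 0 1)] with x hx
      rw [hp₁, if_pos (abs_lt.2 ⟨by linarith [hx.1], hx.2⟩)]
    have heq := tendsto_nhds_unique h1 h2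
    rw [hp₁ 1, if_neg (by norm_num)] at heq
    have hE := Real.exp_pos (-(1:ℝ) ^ 2 / 2)
    rw [show |(1:ℝ)| = 1 by norm_num, show -((1 - h) / (1 - h)) + 1/2 = -(1:ℝ)^2/2 by
      rw [div_self h1h']; norm_num] at heq
    have h2' := mul_right_cancel₀ (ne_of_gt hE) heq
    rw [div_eq_div_iff (by positivity) hD₀ne] at h2'
    nlinarith
  · -- discontinuity at -1
    intro hc
    have h1 : Filter.Tendsto p₁ (nhdsWithin (-1) (Set.Ioi (-1))) (nhds (p₁ (-1))) :=
      hc.tendsto.mono_left nhdsWithin_le_nhds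
    have h2 : Filter.Tendsto p₁ (nhdsWithin (-1) (Set.Ioi (-1)))
        (nhds (1 / D₀ * Real.exp (-(-1:ℝ) ^ 2 / 2))) := by
      have hq : Filter.Tendsto (fun x : ℝ => 1 / D₀ * Real.exp (-x ^ 2 / 2))
          (nhdsWithin (-1) (Set.Ioi (-1))) (nhds (1 / D₀ * Real.exp (-(-1:ℝ) ^ 2 / 2))) := by
        apply Filter.Tendsto.mono_left _ nhdsWithin_le_nhds
        exact (Continuous.continuousAt (by fun_prop)).tendsto
      apply hq.congr'
      filter_upwards [Ioo_mem_nhdsGT_of_mem (by norm_num : (-1:ℝ) ∈ Set.Ico (-1) 0)] with x hx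
      rw [hp₁, if_pos (abs_lt.2 ⟨hx.1, by linarith [hx.2]⟩)]
    have heq := tendsto_nhds_unique h1 h2
    rw [hp₁ (-1), if_neg (by rw [abs_of_neg (by norm_num)]; norm_num)] at heq
    have hE := Real.exp_pos (-(-1:ℝ) ^ 2 / 2)
    rw [show |(-1:ℝ)| = 1 by norm_num, show -((1 - h) / (1 - h)) + 1/2 = -(-1:ℝ)^2/2 by
      rw [div_self h1h']; norm_num] at heq
    have h2' := mul_right_cancel₀ (ne_of_gt hE) heq
    rw [div_eq_div_iff (by positivity) hD₀ne] at h2'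
    nlinarith
end

section
/- Define V₀ : ℝ → ℝ by V₀(x) = x²/2 for |x| < 1 and V₀(x) = |x| − 1/2 for |x| ≥ 1, and let D₀ = ∫_ℝ exp(−V₀(x)) dx. Let γ be the standard Gaussian probability measure on ℝ, with density (1/√(2π))·exp(−x²/2). Then for every Borel probability measure μ on ℝ that has a Lebesgue density p satisfying p(x) = (1/D₀)·exp(−x²/2) for almost every x ∈ (−1, 1), the Kullback–Leibler divergence satisfies KL(μ ‖ γ) > 0.019. -/
open MeasureTheory ProbabilityTheory
open scoped ENNReal

open scoped Classical in
/-- The Kullback–Leibler divergence `KL(μ ‖ ν) = ∫ log (dμ/dν) dμ` when `μ ≪ ν` and the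
log-likelihood ratio is integrable, and `+∞` otherwise. -/
noncomputable def klDiv (μ ν : Measure ℝ) : ℝ≥0∞ :=
  if μ ≪ ν ∧ Integrable (llr μ ν) μ
  then ENNReal.ofReal (∫ x, llr μ ν x ∂μ)
  else ⊤

section AuxLemmas
open Real MeasureTheory intervalIntegral

lemma exp_neg_bound4 {t : ℝ} (h0 : 0 ≤ t) (h1 : t ≤ 1) :
    |Real.exp (-t) - (1 - t + t^2/2 - t^3/6)| ≤ t^4 * (5/96) := by
  have h := Real.exp_bound (x := -t) (by rwa [abs_neg, abs_of_nonneg h0]) (n := 4) (by norm_num)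
  simp only [Finset.sum_range_succ, Finset.sum_range_zero] at h
  rw [abs_neg, abs_of_nonneg h0] at h
  convert h using 2
  · norm_num [Nat.factorial]; ring
  · norm_num [Nat.factorial]

lemma exp_neg_bound6 {t : ℝ} (h0 : 0 ≤ t) (h1 : t ≤ 1) :
    |Real.exp (-t) - (1 - t + t^2/2 - t^3/6 + t^4/24 - t^5/120)| ≤ t^6 * (7/4320) := by
  have h := Real.exp_bound (x := -t) (by rwa [abs_neg, abs_of_nonneg h0]) (n := 6) (by norm_num)
  simp only [Finset.sum_range_succ, Finset.sum_range_zero] at h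
  rw [abs_neg, abs_of_nonneg h0] at h
  convert h using 2
  · norm_num [Nat.factorial]; ring
  · norm_num [Nat.factorial]

lemma exp_half_bounds : (0.60648:ℝ) ≤ Real.exp (-(1/2)) ∧ Real.exp (-(1/2)) ≤ 0.60654 := by
  have h := exp_neg_bound6 (t := 1/2) (by norm_num) (by norm_num)
  rw [abs_le] at h
  constructor <;> [nlinarith [h.1]; nlinarith [h.2]]

lemma exp_two_fifth_bounds : (0.67030:ℝ) ≤ Real.exp (-(2/5)) ∧ Real.exp (-(2/5)) ≤ 0.67033 := by
  have h := exp_neg_bound6 (t := 2/5) (by norm_num) (by norm_num)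
  rw [abs_le] at h
  constructor <;> [nlinarith [h.1]; nlinarith [h.2]]

lemma exp_t0_lb : (0.7759:ℝ) ≤ Real.exp (-(0.25312)) := by
  have h := exp_neg_bound4 (t := 0.25312) (by norm_num) (by norm_num)
  rw [abs_le] at h
  nlinarith [h.1]

lemma gauss_pt_ub {x : ℝ} (hx : x^2 ≤ 1) :
    Real.exp (-x^2/2) ≤ 1 - x^2/2 + x^4/8 - x^6/48 + 5*x^8/1536 := by
  have h := exp_neg_bound4 (t := x^2/2) (by positivity) (by linarith)
  rw [abs_le] at h
  have e : -(x^2/2) = -x^2/2 := by ring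
  rw [e] at h
  nlinarith [h.2]

lemma gauss_pt_lb {x : ℝ} (hx : x^2 ≤ 1) :
    1 - x^2/2 + x^4/8 - x^6/48 - 5*x^8/1536 ≤ Real.exp (-x^2/2) := by
  have h := exp_neg_bound4 (t := x^2/2) (by positivity) (by linarith)
  rw [abs_le] at h
  have e : -(x^2/2) = -x^2/2 := by ring
  rw [e] at h
  nlinarith [h.1]

lemma poly_integral (c : ℝ) :
    ∫ x in (-1:ℝ)..1, (1 - x^2/2 + x^4/8 - x^6/48 + c*x^8/1536) =
      2 - 1/3 + 1/20 - 1/168 + c/6912 := by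
  have h : ∀ x ∈ Set.uIcc (-1:ℝ) 1,
      HasDerivAt (fun y : ℝ => y - y^3/6 + y^5/40 - y^7/336 + c*y^9/13824)
        (1 - x^2/2 + x^4/8 - x^6/48 + c*x^8/1536) x := by
    intro x _
    have : HasDerivAt (fun y : ℝ => y - y^3/6 + y^5/40 - y^7/336 + c*y^9/13824)
        (1 - (3*x^2)/6 + (5*x^4)/40 - (7*x^6)/336 + c*(9*x^8)/13824) x := by
      have h1 := hasDerivAt_id x
      have h3 := hasDerivAt_pow 3 x
      have h5 := hasDerivAt_pow 5 x
      have h7 := hasDerivAt_pow 7 x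
      have h9 := hasDerivAt_pow 9 x
      have := (((h1.sub (h3.div_const 6)).add (h5.div_const 40)).sub
        (h7.div_const 336)).add ((h9.const_mul c).div_const 13824)
      exact this.congr_deriv (by norm_num)
    convert this using 1; ring
  rw [integral_eq_sub_of_hasDerivAt h (by apply Continuous.intervalIntegrable; continuity)]
  norm_num; ring

lemma I_bounds : (1.7099:ℝ) ≤ (∫ x in Set.Ioo (-1:ℝ) 1, Real.exp (-x^2/2)) ∧
    (∫ x in Set.Ioo (-1:ℝ) 1, Real.exp (-x^2/2)) ≤ 1.7115 := by
  have hIoo : (∫ x in Set.Ioo (-1:ℝ) 1, Real.exp (-x^2/2)) =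
      ∫ x in (-1:ℝ)..1, Real.exp (-x^2/2) := by
    rw [intervalIntegral.integral_of_le (by norm_num), MeasureTheory.integral_Ioc_eq_integral_Ioo]
  have hexpInt : IntervalIntegrable (fun x : ℝ => Real.exp (-x^2/2)) volume (-1) 1 := by
    apply Continuous.intervalIntegrable; continuity
  have hsq : ∀ x ∈ Set.Icc (-1:ℝ) 1, x^2 ≤ 1 := fun x hx => by
    obtain ⟨h1, h2⟩ := hx; nlinarith
  have hpolyL : IntervalIntegrable (fun x : ℝ => 1 - x^2/2 + x^4/8 - x^6/48 + (-5)*x^8/1536)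
      volume (-1) 1 := Continuous.intervalIntegrable (by fun_prop) _ _
  have hpolyU : IntervalIntegrable (fun x : ℝ => 1 - x^2/2 + x^4/8 - x^6/48 + 5*x^8/1536)
      volume (-1) 1 := Continuous.intervalIntegrable (by fun_prop) _ _
  constructor
  · rw [hIoo]
    have hmono := intervalIntegral.integral_mono_on (by norm_num : (-1:ℝ) ≤ 1)
      hpolyL hexpInt
      (fun x hx => by have := gauss_pt_lb (hsq x hx); linarith)
    rw [poly_integral (-5)] at hmono
    linarith
  · rw [hIoo]
    have hmono := intervalIntegral.integral_mono_on (by norm_num : (-1:ℝ) ≤ 1)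
      hexpInt hpolyU
      (fun x hx => gauss_pt_ub (hsq x hx))
    rw [poly_integral 5] at hmono
    linarith

lemma integral_llr_nonneg {α : Type*} {mα : MeasurableSpace α} {m n : Measure α}
    [IsProbabilityMeasure m] [IsProbabilityMeasure n] (hmn : m ≪ n)
    (h : Integrable (llr m n) m) : 0 ≤ ∫ x, llr m n x ∂m := by
  have hg : ∀ᵐ x ∂m, Real.exp (-llr m n x) = (n.rnDeriv m x).toReal :=
    exp_neg_llr hmn
  have hpt : ∀ᵐ x ∂m, 1 - (n.rnDeriv m x).toReal ≤ llr m n x := by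
    filter_upwards [hg] with x hx
    have hpos : 0 < (n.rnDeriv m x).toReal := hx ▸ Real.exp_pos _
    have hlog := Real.log_le_sub_one_of_pos hpos
    rw [← hx, Real.log_exp] at hlog
    linarith
  have hint : Integrable (fun x => 1 - (n.rnDeriv m x).toReal) m :=
    (integrable_const 1).sub Measure.integrable_toReal_rnDeriv
  have hle : ∫ x, (n.rnDeriv m x).toReal ∂m ≤ 1 := by
    have := Measure.setIntegral_toReal_rnDeriv_le (μ := n) (ν := m)
      (s := Set.univ) (measure_ne_top n _)
    simpa using this
  calc (0:ℝ) ≤ ∫ x, (1 - (n.rnDeriv m x).toReal) ∂m := by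
        rw [integral_sub (integrable_const 1) Measure.integrable_toReal_rnDeriv]
        simp only [MeasureTheory.integral_const, measure_univ, probReal_univ, ENNReal.toReal_one, smul_eq_mul, one_mul]
        linarith
    _ ≤ ∫ x, llr m n x ∂m := integral_mono_ae hint h hpt

lemma eq_on_mid (V₀ : ℝ → ℝ) (hV₀ : ∀ x, V₀ x = if |x| < 1 then x ^ 2 / 2 else |x| - 1 / 2) :
    Set.EqOn (fun x => Real.exp (-V₀ x)) (fun x => Real.exp (-x^2/2)) (Set.Ioo (-1:ℝ) 1) := by
  intro x hx
  simp only
  rw [hV₀ x, if_pos (abs_lt.mpr ⟨hx.1, hx.2⟩)]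
  congr 1; ring

lemma eq_on_left (V₀ : ℝ → ℝ) (hV₀ : ∀ x, V₀ x = if |x| < 1 then x ^ 2 / 2 else |x| - 1 / 2) :
    Set.EqOn (fun x => Real.exp (-V₀ x)) (fun x => Real.exp (1/2) * Real.exp x) (Set.Iic (-1:ℝ)) := by
  intro x hx
  simp only [Set.mem_Iic] at hx
  simp only
  rw [hV₀ x, if_neg (by rw [abs_lt]; push_neg; intro; linarith),
    abs_of_nonpos (by linarith), ← Real.exp_add]
  congr 1; ring

lemma eq_on_right (V₀ : ℝ → ℝ) (hV₀ : ∀ x, V₀ x = if |x| < 1 then x ^ 2 / 2 else |x| - 1 / 2) :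
    Set.EqOn (fun x => Real.exp (-V₀ x)) (fun x => Real.exp (1/2) * Real.exp (-x)) (Set.Ici (1:ℝ)) := by
  intro x hx
  simp only [Set.mem_Ici] at hx
  simp only
  rw [hV₀ x, if_neg (by rw [abs_lt]; push_neg; intro; linarith),
    abs_of_nonneg (by linarith), ← Real.exp_add]
  congr 1; ring

lemma exp_sq_integrable : Integrable (fun x : ℝ => Real.exp (-x^2/2)) := by
  have h := integrable_exp_neg_mul_sq (b := 1/2) (by norm_num)
  have e : (fun x : ℝ => Real.exp (-x^2/2)) = fun x : ℝ => Real.exp (-(1/2) * x^2) := by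
    funext x; congr 1; ring
  rw [e]; exact h

lemma univ_split : Set.Ioo (-1:ℝ) 1 ∪ (Set.Iic (-1:ℝ) ∪ Set.Ici (1:ℝ)) = Set.univ := by
  ext x
  simp only [Set.mem_union, Set.mem_Ioo, Set.mem_Iic, Set.mem_Ici, Set.mem_univ, iff_true]
  by_cases h1 : x ≤ -1
  · tauto
  · by_cases h2 : 1 ≤ x
    · tauto
    · left; constructor <;> linarith

lemma intOn_mid (V₀ : ℝ → ℝ) (hV₀ : ∀ x, V₀ x = if |x| < 1 then x ^ 2 / 2 else |x| - 1 / 2) :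
    IntegrableOn (fun x => Real.exp (-V₀ x)) (Set.Ioo (-1:ℝ) 1) :=
  (exp_sq_integrable.integrableOn.congr_fun (eq_on_mid V₀ hV₀).symm measurableSet_Ioo)

lemma intOn_left (V₀ : ℝ → ℝ) (hV₀ : ∀ x, V₀ x = if |x| < 1 then x ^ 2 / 2 else |x| - 1 / 2) :
    IntegrableOn (fun x => Real.exp (-V₀ x)) (Set.Iic (-1:ℝ)) := by
  have h : IntegrableOn (fun x => Real.exp (1/2) * Real.exp x) (Set.Iic (-1:ℝ)) :=
    (integrableOn_exp_Iic (-1)).const_mul (Real.exp (1/2))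
  exact h.congr_fun (eq_on_left V₀ hV₀).symm measurableSet_Iic

lemma intOn_right (V₀ : ℝ → ℝ) (hV₀ : ∀ x, V₀ x = if |x| < 1 then x ^ 2 / 2 else |x| - 1 / 2) :
    IntegrableOn (fun x => Real.exp (-V₀ x)) (Set.Ici (1:ℝ)) := by
  have h0 : IntegrableOn (fun x : ℝ => Real.exp (-x)) (Set.Ici (1:ℝ)) := by
    rw [integrableOn_Ici_iff_integrableOn_Ioi]
    have h := exp_neg_integrableOn_Ioi (1:ℝ) (b := 1) one_pos
    simpa using h
  have h : IntegrableOn (fun x : ℝ => Real.exp (1/2) * Real.exp (-x)) (Set.Ici (1:ℝ)) :=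
    h0.const_mul (Real.exp (1/2))
  exact h.congr_fun (eq_on_right V₀ hV₀).symm measurableSet_Ici

lemma D0_eq (V₀ : ℝ → ℝ) (hV₀ : ∀ x, V₀ x = if |x| < 1 then x ^ 2 / 2 else |x| - 1 / 2) :
    ∫ x : ℝ, Real.exp (-V₀ x) =
      (∫ x in Set.Ioo (-1:ℝ) 1, Real.exp (-x^2/2)) + 2 * Real.exp (-(1/2)) := by
  have hdisj1 : Disjoint (Set.Iic (-1:ℝ)) (Set.Ici (1:ℝ)) := by
    rw [Set.disjoint_left]; intro x hx hx'
    simp only [Set.mem_Iic] at hx; simp only [Set.mem_Ici] at hx'; linarith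
  have hdisj2 : Disjoint (Set.Ioo (-1:ℝ) 1) (Set.Iic (-1:ℝ) ∪ Set.Ici (1:ℝ)) := by
    rw [Set.disjoint_left]; intro x hx hx'
    rcases hx' with h | h
    · simp only [Set.mem_Iic] at h; exact absurd hx.1 (by linarith)
    · simp only [Set.mem_Ici] at h; exact absurd hx.2 (by linarith)
  rw [← setIntegral_univ (f := fun x => Real.exp (-V₀ x)), ← univ_split,
    setIntegral_union hdisj2 (measurableSet_Iic.union measurableSet_Ici)
      (intOn_mid V₀ hV₀) ((intOn_left V₀ hV₀).union (intOn_right V₀ hV₀)),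
    setIntegral_union hdisj1 measurableSet_Ici (intOn_left V₀ hV₀) (intOn_right V₀ hV₀),
    setIntegral_congr_fun measurableSet_Ioo (eq_on_mid V₀ hV₀),
    setIntegral_congr_fun measurableSet_Iic (eq_on_left V₀ hV₀),
    setIntegral_congr_fun measurableSet_Ici (eq_on_right V₀ hV₀)]
  have h1 : ∫ x in Set.Iic (-1:ℝ), Real.exp (1/2) * Real.exp x
      = Real.exp (1/2) * Real.exp (-1) := by
    rw [MeasureTheory.integral_const_mul, integral_exp_Iic]
  have h2 : ∫ x in Set.Ici (1:ℝ), Real.exp (1/2) * Real.exp (-x)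
      = Real.exp (1/2) * Real.exp (-1) := by
    rw [MeasureTheory.integral_Ici_eq_integral_Ioi, MeasureTheory.integral_const_mul,
      integral_exp_neg_Ioi]
  rw [h1, h2, ← Real.exp_add]
  norm_num
  ring

end AuxLemmas

set_option maxHeartbeats 1000000 in
/-- **A uniform lower bound on the KL divergence along all forward-Euler iterates.**
Every Borel probability measure on `ℝ` whose Lebesgue density agrees with
`(1/D₀)·exp (-x²/2)` a.e. on `(-1, 1)` — where `D₀ = ∫ exp (-V₀)` for the piecewise
potential `V₀` — is at KL divergence more than `0.019` from the standard Gaussian. -/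
theorem stmt_13
    (V₀ : ℝ → ℝ)
    (hV₀ : ∀ x, V₀ x = if |x| < 1 then x ^ 2 / 2 else |x| - 1 / 2)
    (D₀ : ℝ) (hD₀ : D₀ = ∫ x : ℝ, Real.exp (-V₀ x))
    (μ : Measure ℝ) [IsProbabilityMeasure μ]
    (p : ℝ → ℝ)
    (hμ : μ = volume.withDensity fun x => ENNReal.ofReal (p x))
    (hp : ∀ᵐ x ∂(volume.restrict (Set.Ioo (-1 : ℝ) 1)),
      p x = 1 / D₀ * Real.exp (-x ^ 2 / 2)) :
    ENNReal.ofReal 0.019 < klDiv μ (gaussianReal 0 1) := by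
  set ν := gaussianReal 0 1 with hν
  by_cases hc : μ ≪ ν ∧ Integrable (llr μ ν) μ
  swap
  · rw [klDiv, if_neg hc]; exact ENNReal.ofReal_lt_top
  obtain ⟨hac, hint⟩ := hc
  rw [klDiv, if_pos ⟨hac, hint⟩]
  obtain ⟨hI1, hI2⟩ := I_bounds
  obtain ⟨hE1, hE2⟩ := exp_half_bounds
  obtain ⟨hF1, hF2⟩ := exp_two_fifth_bounds
  set I : ℝ := ∫ x in Set.Ioo (-1:ℝ) 1, Real.exp (-x^2/2) with hI
  have hD : D₀ = I + 2 * Real.exp (-(1/2)) := by rw [hD₀, D0_eq V₀ hV₀, ← hI]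
  have hD0pos : 0 < D₀ := by rw [hD]; linarith
  -- μ of the interval
  have hIg : IntegrableOn (fun x : ℝ => Real.exp (-x^2/2)) (Set.Ioo (-1:ℝ) 1) volume :=
    exp_sq_integrable.integrableOn
  have hμA : (μ (Set.Ioo (-1:ℝ) 1)).toReal = I / D₀ := by
    have h1 : μ (Set.Ioo (-1:ℝ) 1) = ∫⁻ x in Set.Ioo (-1:ℝ) 1, ENNReal.ofReal (p x) := by
      rw [hμ, withDensity_apply _ measurableSet_Ioo]
    have h2 : ∫⁻ x in Set.Ioo (-1:ℝ) 1, ENNReal.ofReal (p x)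
        = ∫⁻ x in Set.Ioo (-1:ℝ) 1, ENNReal.ofReal (1 / D₀ * Real.exp (-x ^ 2 / 2)) :=
      lintegral_congr_ae (hp.mono fun x hx => by dsimp only; rw [hx])
    have h3 : ∫⁻ x in Set.Ioo (-1:ℝ) 1, ENNReal.ofReal (1 / D₀ * Real.exp (-x ^ 2 / 2))
        = ENNReal.ofReal (∫ x in Set.Ioo (-1:ℝ) 1, 1 / D₀ * Real.exp (-x ^ 2 / 2)) := by
      rw [← ofReal_integral_eq_lintegral_ofReal (hIg.const_mul (1/D₀))
        (Filter.Eventually.of_forall fun x => by positivity)]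
    have h4 : ∫ x in Set.Ioo (-1:ℝ) 1, 1 / D₀ * Real.exp (-x ^ 2 / 2) = I / D₀ := by
      rw [integral_const_mul, ← hI]; ring
    rw [h1, h2, h3, h4, ENNReal.toReal_ofReal (by positivity)]
  -- ν of the interval
  have hs2 : Real.sqrt (2 * Real.pi) ^ 2 = 2 * Real.pi :=
    Real.sq_sqrt (by positivity)
  have hs0 : 0 < Real.sqrt (2 * Real.pi) := Real.sqrt_pos.mpr (by positivity)
  have hπ1 := Real.pi_gt_d6
  have hπ2 := Real.pi_lt_d6
  have hsl : (2.50662:ℝ) ≤ Real.sqrt (2 * Real.pi) := by nlinarith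
  have hsu : Real.sqrt (2 * Real.pi) ≤ 2.50663 := by nlinarith
  have hνA : (ν (Set.Ioo (-1:ℝ) 1)).toReal = I / Real.sqrt (2 * Real.pi) := by
    rw [hν, gaussianReal_apply_eq_integral 0 one_ne_zero]
    have h5 : ∫ x in Set.Ioo (-1:ℝ) 1, gaussianPDFReal 0 1 x
        = (Real.sqrt (2 * Real.pi))⁻¹ * I := by
      rw [hI, ← integral_const_mul]
      refine setIntegral_congr_fun measurableSet_Ioo fun x _ => ?_
      simp only [gaussianPDFReal, NNReal.coe_one, mul_one, sub_zero]
    rw [h5, ENNReal.toReal_ofReal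
      (mul_nonneg (inv_nonneg.mpr (Real.sqrt_nonneg _)) (by linarith)), inv_mul_eq_div]
  -- the tilt function
  set f : ℝ → ℝ := (Set.Ioo (-1:ℝ) 1).indicator (fun _ => (-2/5 : ℝ)) with hf
  have hfμ : Integrable f μ := (integrable_const _).indicator measurableSet_Ioo
  have hintf : ∫ x, f x ∂μ = (μ (Set.Ioo (-1:ℝ) 1)).toReal * (-2/5) := by
    rw [hf, integral_indicator_const _ measurableSet_Ioo]; simp [smul_eq_mul, Measure.real]
  have hexpf : (fun x => Real.exp (f x))
      = fun x => 1 + (Set.Ioo (-1:ℝ) 1).indicator (fun _ => Real.exp (-2/5) - 1) x := by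
    funext x
    by_cases hx : x ∈ Set.Ioo (-1:ℝ) 1
    · simp [hf, Set.indicator_of_mem hx]
    · simp [hf, Set.indicator_of_notMem hx]
  have hfν : Integrable (fun x => Real.exp (f x)) ν := by
    rw [hexpf]
    exact (integrable_const 1).add ((integrable_const _).indicator measurableSet_Ioo)
  have hintexpf : ∫ x, Real.exp (f x) ∂ν
      = 1 + (Real.exp (-2/5) - 1) * (ν (Set.Ioo (-1:ℝ) 1)).toReal := by
    rw [hexpf, integral_add (integrable_const 1)
      ((integrable_const _).indicator measurableSet_Ioo),
      integral_const, integral_indicator_const _ measurableSet_Ioo]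
    simp [smul_eq_mul, mul_comm, Measure.real]
  -- tilted measure and Donsker–Varadhan
  haveI : IsProbabilityMeasure (ν.tilted f) := isProbabilityMeasure_tilted hfν
  have hac' : μ ≪ ν.tilted f := hac.trans (absolutelyContinuous_tilted hfν)
  have hint' : Integrable (llr μ (ν.tilted f)) μ :=
    integrable_llr_tilted_right hac hfμ hint hfν
  have hkey := integral_llr_tilted_right hac hfμ hfν hint
  have hnn : 0 ≤ ∫ x, llr μ (ν.tilted f) x ∂μ := integral_llr_nonneg hac' hint'
  have hlower : ∫ x, f x ∂μ - Real.log (∫ x, Real.exp (f x) ∂ν)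
      ≤ ∫ x, llr μ ν x ∂μ := by linarith
  -- numerics
  have hb0 : 0 ≤ (ν (Set.Ioo (-1:ℝ) 1)).toReal := ENNReal.toReal_nonneg
  have ha0 : 0 ≤ (μ (Set.Ioo (-1:ℝ) 1)).toReal := ENNReal.toReal_nonneg
  have haub : (μ (Set.Ioo (-1:ℝ) 1)).toReal ≤ 0.5853 := by
    rw [hμA, div_le_iff₀ hD0pos, hD]; nlinarith
  have hb1 : (0.6821:ℝ) ≤ (ν (Set.Ioo (-1:ℝ) 1)).toReal := by
    rw [hνA, le_div_iff₀ hs0]; nlinarith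
  have hb2 : (ν (Set.Ioo (-1:ℝ) 1)).toReal ≤ 0.683 := by
    rw [hνA, div_le_iff₀ hs0]; nlinarith
  have hXpos : 0 < ∫ x, Real.exp (f x) ∂ν := by
    rw [hintexpf]
    have : (1 - Real.exp (-2/5)) * (ν (Set.Ioo (-1:ℝ) 1)).toReal ≤ 0.3297 * 0.683 :=
      mul_le_mul (by linarith) hb2 hb0 (by norm_num)
    nlinarith
  have hXub : ∫ x, Real.exp (f x) ∂ν ≤ 0.77514 := by
    rw [hintexpf]
    have : (0.32967:ℝ) * 0.6821 ≤ (1 - Real.exp (-2/5)) * (ν (Set.Ioo (-1:ℝ) 1)).toReal :=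
      mul_le_mul (by linarith) hb1 (by norm_num) (by linarith)
    nlinarith
  have hlog : Real.log (∫ x, Real.exp (f x) ∂ν)
      < -(2/5) * (μ (Set.Ioo (-1:ℝ) 1)).toReal - 0.019 := by
    rw [Real.log_lt_iff_lt_exp hXpos]
    have h1 : Real.exp (-(0.25312))
        ≤ Real.exp (-(2/5) * (μ (Set.Ioo (-1:ℝ) 1)).toReal - 0.019) :=
      Real.exp_le_exp.mpr (by nlinarith)
    have h2 := exp_t0_lb
    linarith
  have hK : (0.019:ℝ) < ∫ x, llr μ ν x ∂μ := by nlinarith [hlower, hintf, hlog]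
  rw [ENNReal.ofReal_lt_ofReal_iff (lt_trans (by norm_num) hK)]
  exact hK
end

section
/- Let d ≥ 1, ε > 0, let C ⊆ ℝ^d be a nonempty compact set, and let U : ℝ^d → ℝ be continuous. Let φ_ε(x) = exp(−‖x‖²/(2ε)), and for a Borel probability measure μ supported in C define the regularized KL functional F^ε[μ] = ∫_C ( U(x) + ln( ∫_C φ_ε(x − z) dμ(z) ) ) dμ(x). Then for all Borel probability measures ρ, ν supported in C, the one-sided derivative of t ↦ F^ε[(1−t)ρ + tν] at t = 0 exists and equals ∫ δ dν − ∫ δ dρ, where δ : ℝ^d → ℝ is the first variation δ(x) = U(x) + ∫_C φ_ε(x − z) / ( ∫_C φ_ε(z − w) dρ(w) ) dρ(z) + ln( ∫_C φ_ε(x − z) dρ(z) ). That is, lim_{t→0⁺} ( F^ε[(1−t)ρ + tν] − F^ε[ρ] ) / t = ∫ δ dν − ∫ δ dρ. -/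
open MeasureTheory Filter

private lemma log_diff_le_aux {m p q : ℝ} (hm : 0 < m) (hp : m ≤ p) (hq : m ≤ q) :
    Real.log p - Real.log q ≤ |p - q| / m := by
  have hq0 : 0 < q := lt_of_lt_of_le hm hq
  have hp0 : 0 < p := lt_of_lt_of_le hm hp
  rw [← Real.log_div hp0.ne' hq0.ne']
  calc Real.log (p / q) ≤ p / q - 1 := Real.log_le_sub_one_of_pos (by positivity)
    _ = (p - q) / q := by field_simp
    _ ≤ |p - q| / m := div_le_div₀ (abs_nonneg _) (le_abs_self _) hm hq

private lemma log_lip_aux {m p q : ℝ} (hm : 0 < m) (hp : m ≤ p) (hq : m ≤ q) :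
    |Real.log p - Real.log q| ≤ |p - q| / m :=
  abs_sub_le_iff.mpr ⟨log_diff_le_aux hm hp hq,
    by rw [abs_sub_comm]; exact log_diff_le_aux hm hq hp⟩

private lemma abs_log_le_aux {m p : ℝ} (hm : 0 < m) (hmp : m ≤ p) (hp1 : p ≤ 1) :
    |Real.log p| ≤ -Real.log m := by
  rw [abs_of_nonpos (Real.log_nonpos (by linarith) hp1)]
  have := Real.log_le_log hm hmp
  linarith

/-- **First variation of the regularized KL divergence.** For the Gaussian-regularized KL
functional `F^ε[μ] = ∫ (U + ln (φ_ε * μ)) dμ` over probability measures supported in the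
compact set `C`, the one-sided derivative of `t ↦ F^ε[(1-t)ρ + tν]` at `t = 0` equals
`∫ δ dν - ∫ δ dρ`, where `δ` is the displayed first variation of `F^ε` at `ρ`. -/
theorem stmt_16 {d : ℕ} (hd : 1 ≤ d) (ε : ℝ) (hε : 0 < ε)
    (C : Set (EuclideanSpace ℝ (Fin d))) (hCne : C.Nonempty) (hCcomp : IsCompact C)
    (U : EuclideanSpace ℝ (Fin d) → ℝ) (hU : Continuous U)
    (φ : EuclideanSpace ℝ (Fin d) → ℝ)
    (hφ : ∀ x, φ x = Real.exp (-‖x‖ ^ 2 / (2 * ε)))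
    (Fε : Measure (EuclideanSpace ℝ (Fin d)) → ℝ)
    (hFε : ∀ μ : Measure (EuclideanSpace ℝ (Fin d)),
      Fε μ = ∫ x, (U x + Real.log (∫ z, φ (x - z) ∂μ)) ∂μ)
    (ρ ν : Measure (EuclideanSpace ℝ (Fin d)))
    [IsProbabilityMeasure ρ] [IsProbabilityMeasure ν]
    (hρC : ρ Cᶜ = 0) (hνC : ν Cᶜ = 0)
    (δ : EuclideanSpace ℝ (Fin d) → ℝ)
    (hδ : ∀ x, δ x = U x
      + ∫ z, φ (x - z) / ∫ w, φ (z - w) ∂ρ ∂ρ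
      + Real.log (∫ z, φ (x - z) ∂ρ)) :
    Tendsto
      (fun t : ℝ =>
        (Fε (ENNReal.ofReal (1 - t) • ρ + ENNReal.ofReal t • ν) - Fε ρ) / t)
      (nhdsWithin 0 (Set.Ioi 0))
      (nhds ((∫ x, δ x ∂ν) - ∫ x, δ x ∂ρ)) := by
  classical
  -- basic facts about φ
  have hφ_cont : Continuous φ := by
    have hfe : φ = fun x => Real.exp (-‖x‖ ^ 2 / (2 * ε)) := funext hφ
    rw [hfe]; fun_prop
  have hφ_pos : ∀ x, 0 < φ x := fun x => by rw [hφ]; positivity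
  have hφ_le_one : ∀ x, φ x ≤ 1 := fun x => by
    rw [hφ, ← Real.exp_zero]
    apply Real.exp_le_exp.2
    have h1 : (0:ℝ) ≤ ‖x‖ ^ 2 := sq_nonneg _
    have h2 : (0:ℝ) < 2 * ε := by linarith
    exact div_nonpos_of_nonpos_of_nonneg (by linarith) h2.le
  have hφ_symm : ∀ x z : EuclideanSpace ℝ (Fin d), φ (x - z) = φ (z - x) := fun x z => by
    rw [hφ, hφ, norm_sub_rev]
  -- bounds on C
  obtain ⟨R, hR⟩ := hCcomp.isBounded.exists_norm_le
  set m : ℝ := Real.exp (-(2 * R) ^ 2 / (2 * ε)) with hm_def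
  have hm_pos : 0 < m := Real.exp_pos _
  have hφ_lb : ∀ x ∈ C, ∀ z ∈ C, m ≤ φ (x - z) := by
    intro x hx z hz
    rw [hφ, hm_def]
    apply Real.exp_le_exp.2
    have h2ε : (0:ℝ) < 2 * ε := by linarith
    have h1 : ‖x - z‖ ≤ 2 * R := by
      calc ‖x - z‖ ≤ ‖x‖ + ‖z‖ := norm_sub_le _ _
        _ ≤ R + R := add_le_add (hR x hx) (hR z hz)
        _ = 2 * R := by ring
    have h2 : ‖x - z‖ ^ 2 ≤ (2 * R) ^ 2 := by nlinarith [norm_nonneg (x - z)]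
    exact (div_le_div_iff_of_pos_right h2ε).mpr (by linarith)
  -- a.e. membership
  have hρ_ae : ∀ᵐ x ∂ρ, x ∈ C := by rw [ae_iff]; exact hρC
  have hν_ae : ∀ᵐ x ∂ν, x ∈ C := by rw [ae_iff]; exact hνC
  -- the two convolution functions
  set a : EuclideanSpace ℝ (Fin d) → ℝ := fun x => ∫ z, φ (x - z) ∂ρ with ha_def
  set b : EuclideanSpace ℝ (Fin d) → ℝ := fun x => ∫ z, φ (x - z) ∂ν with hb_def
  have ha_eq : ∀ x, (∫ z, φ (x - z) ∂ρ) = a x := fun _ => rfl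
  have hb_eq : ∀ x, (∫ z, φ (x - z) ∂ν) = b x := fun _ => rfl
  have hslice_meas : ∀ x : EuclideanSpace ℝ (Fin d),
      Continuous (fun z : EuclideanSpace ℝ (Fin d) => φ (x - z)) := fun x =>
    hφ_cont.comp (continuous_const.sub continuous_id)
  have hslice_norm : ∀ x z : EuclideanSpace ℝ (Fin d), ‖φ (x - z)‖ ≤ 1 := fun x z => by
    rw [Real.norm_eq_abs, abs_of_pos (hφ_pos _)]; exact hφ_le_one _
  have hIa : ∀ x, Integrable (fun z => φ (x - z)) ρ := fun x =>
    (integrable_const 1).mono' (hslice_meas x).aestronglyMeasurable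
      (ae_of_all _ fun z => hslice_norm x z)
  have hIb : ∀ x, Integrable (fun z => φ (x - z)) ν := fun x =>
    (integrable_const 1).mono' (hslice_meas x).aestronglyMeasurable
      (ae_of_all _ fun z => hslice_norm x z)
  have ha_cont : Continuous a := by
    rw [ha_def]
    refine continuous_of_dominated (bound := fun _ => (1:ℝ))
      (fun x => (hslice_meas x).aestronglyMeasurable)
      (fun x => ae_of_all _ fun z => hslice_norm x z)
      (integrable_const 1)
      (ae_of_all _ fun z => hφ_cont.comp (continuous_id.sub continuous_const))
  have hb_cont : Continuous b := by
    rw [hb_def]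
    refine continuous_of_dominated (bound := fun _ => (1:ℝ))
      (fun x => (hslice_meas x).aestronglyMeasurable)
      (fun x => ae_of_all _ fun z => hslice_norm x z)
      (integrable_const 1)
      (ae_of_all _ fun z => hφ_cont.comp (continuous_id.sub continuous_const))
  have ha_nonneg : ∀ x, 0 ≤ a x := fun x => integral_nonneg fun z => (hφ_pos _).le
  have hb_nonneg : ∀ x, 0 ≤ b x := fun x => integral_nonneg fun z => (hφ_pos _).le
  have ha_le : ∀ x, a x ≤ 1 := fun x => by
    calc a x ≤ ∫ _, (1:ℝ) ∂ρ := integral_mono (hIa x) (integrable_const 1) fun z => hφ_le_one _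
      _ = 1 := by simp
  have hb_le : ∀ x, b x ≤ 1 := fun x => by
    calc b x ≤ ∫ _, (1:ℝ) ∂ν := integral_mono (hIb x) (integrable_const 1) fun z => hφ_le_one _
      _ = 1 := by simp
  have ha_lb : ∀ x ∈ C, m ≤ a x := by
    intro x hx
    calc m = ∫ _, m ∂ρ := by simp
      _ ≤ a x := integral_mono_ae (integrable_const m) (hIa x)
          (hρ_ae.mono fun z hz => hφ_lb x hx z hz)
  have hb_lb : ∀ x ∈ C, m ≤ b x := by
    intro x hx
    calc m = ∫ _, m ∂ν := by simp
      _ ≤ b x := integral_mono_ae (integrable_const m) (hIb x)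
          (hν_ae.mono fun z hz => hφ_lb x hx z hz)
  have ha_pos : ∀ x ∈ C, 0 < a x := fun x hx => lt_of_lt_of_le hm_pos (ha_lb x hx)
  -- bound on U
  obtain ⟨K, hK⟩ := (hCcomp.image hU).isBounded.exists_norm_le
  have hKU : ∀ x ∈ C, ‖U x‖ ≤ K := fun x hx => hK _ (Set.mem_image_of_mem U hx)
  -- κ
  set κ : ℝ → EuclideanSpace ℝ (Fin d) → ℝ := fun t x => (1 - t) * a x + t * b x with hκ_def
  have hκ_lb : ∀ t ∈ Set.Icc (0:ℝ) 1, ∀ x ∈ C, m ≤ κ t x := by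
    intro t ht x hx
    have h1 := ha_lb x hx; have h2 := hb_lb x hx
    simp only [hκ_def]
    nlinarith [ht.1, ht.2]
  have hκ_ub : ∀ t ∈ Set.Icc (0:ℝ) 1, ∀ x, κ t x ≤ 1 := by
    intro t ht x
    have h1 := ha_le x; have h2 := hb_le x
    have h3 := ha_nonneg x; have h4 := hb_nonneg x
    simp only [hκ_def]
    nlinarith [ht.1, ht.2]
  have hκ_cont : ∀ t, Continuous (κ t) := fun t =>
    (continuous_const.mul ha_cont).add (continuous_const.mul hb_cont)
  have hlogκ_meas : ∀ (t : ℝ) (μ : Measure (EuclideanSpace ℝ (Fin d))),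
      AEStronglyMeasurable (fun x => U x + Real.log (κ t x)) μ := fun t μ =>
    (hU.measurable.add (Real.measurable_log.comp (hκ_cont t).measurable)).aestronglyMeasurable
  -- Integrability of U + log κ t
  have hIκ : ∀ (μ : Measure (EuclideanSpace ℝ (Fin d))), IsProbabilityMeasure μ →
      (∀ᵐ x ∂μ, x ∈ C) → ∀ t ∈ Set.Icc (0:ℝ) 1,
      Integrable (fun x => U x + Real.log (κ t x)) μ := by
    intro μ hμP hμae t ht
    haveI := hμP
    refine (integrable_const (K + -Real.log m)).mono' (hlogκ_meas t μ)
      (hμae.mono fun x hx => ?_)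
    have h1 := hKU x hx
    have h2 : |Real.log (κ t x)| ≤ -Real.log m :=
      abs_log_le_aux hm_pos (hκ_lb t ht x hx) (hκ_ub t ht x)
    calc ‖U x + Real.log (κ t x)‖ ≤ ‖U x‖ + ‖Real.log (κ t x)‖ := norm_add_le _ _
      _ ≤ K + -Real.log m := add_le_add h1 (by rwa [Real.norm_eq_abs])
  have hκ0 : ∀ x, κ 0 x = a x := fun x => by simp [hκ_def]
  have hI0ρ : Integrable (fun x => U x + Real.log (a x)) ρ := by
    have := hIκ ρ ‹_› hρ_ae 0 ⟨le_rfl, zero_le_one⟩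
    refine this.congr (ae_of_all _ fun x => by simp only [hκ0])
  have hI0ν : Integrable (fun x => U x + Real.log (a x)) ν := by
    have := hIκ ν ‹_› hν_ae 0 ⟨le_rfl, zero_le_one⟩
    refine this.congr (ae_of_all _ fun x => by simp only [hκ0])
  -- Fε formula along the path
  have hFρ : Fε ρ = ∫ x, (U x + Real.log (a x)) ∂ρ := by
    rw [hFε]
  have hFμt : ∀ t ∈ Set.Ioo (0:ℝ) 1,
      Fε (ENNReal.ofReal (1 - t) • ρ + ENNReal.ofReal t • ν)
        = (1 - t) * ∫ x, (U x + Real.log (κ t x)) ∂ρ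
          + t * ∫ x, (U x + Real.log (κ t x)) ∂ν := by
    intro t ht
    have h1t : (0:ℝ) ≤ 1 - t := by linarith [ht.2]
    have ht0 : (0:ℝ) ≤ t := ht.1.le
    set μt := ENNReal.ofReal (1 - t) • ρ + ENNReal.ofReal t • ν with hμt
    have hsplit : ∀ f : EuclideanSpace ℝ (Fin d) → ℝ, Integrable f ρ → Integrable f ν →
        ∫ x, f x ∂μt = (1 - t) * ∫ x, f x ∂ρ + t * ∫ x, f x ∂ν := by
      intro f hfρ hfν
      rw [hμt, integral_add_measure (hfρ.smul_measure ENNReal.ofReal_ne_top)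
        (hfν.smul_measure ENNReal.ofReal_ne_top),
        integral_smul_measure, integral_smul_measure,
        ENNReal.toReal_ofReal h1t, ENNReal.toReal_ofReal ht0]
      simp [smul_eq_mul]
    have hconv : ∀ x, (∫ z, φ (x - z) ∂μt) = κ t x := by
      intro x
      rw [hsplit (fun z => φ (x - z)) (hIa x) (hIb x)]
    rw [hFε]
    have hcg : ∫ x, (U x + Real.log (∫ z, φ (x - z) ∂μt)) ∂μt
        = ∫ x, (U x + Real.log (κ t x)) ∂μt :=
      integral_congr_ae (ae_of_all _ fun x => by simp only [hconv x])
    rw [hcg, hsplit _ (hIκ ρ ‹_› hρ_ae t ⟨ht.1.le, ht.2.le⟩)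
      (hIκ ν ‹_› hν_ae t ⟨ht.1.le, ht.2.le⟩)]
  -- rewrite difference quotient
  have hmain : ∀ t ∈ Set.Ioo (0:ℝ) (1/2),
      (Fε (ENNReal.ofReal (1 - t) • ρ + ENNReal.ofReal t • ν) - Fε ρ) / t
        = (∫ x, (Real.log (κ t x) - Real.log (a x)) / t ∂ρ)
          + ((∫ x, (U x + Real.log (κ t x)) ∂ν) - ∫ x, (U x + Real.log (κ t x)) ∂ρ) := by
    intro t ht
    have ht1 : t ∈ Set.Ioo (0:ℝ) 1 := ⟨ht.1, by linarith [ht.2]⟩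
    have htne : t ≠ 0 := ht.1.ne'
    rw [hFμt t ht1, hFρ]
    have e1 : ∫ x, (Real.log (κ t x) - Real.log (a x)) / t ∂ρ
        = ((∫ x, (U x + Real.log (κ t x)) ∂ρ) - ∫ x, (U x + Real.log (a x)) ∂ρ) / t := by
      rw [← integral_sub (hIκ ρ ‹_› hρ_ae t ⟨ht1.1.le, ht1.2.le⟩) hI0ρ, ← integral_div]
      exact integral_congr_ae (ae_of_all _ fun x => by simp only []; ring)
    rw [e1]
    field_simp
    ring
  -- limits
  have hIoo_mem : Set.Ioo (0:ℝ) (1/2) ∈ nhdsWithin (0:ℝ) (Set.Ioi 0) :=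
    Ioo_mem_nhdsGT_of_mem ⟨le_rfl, by norm_num⟩
  have hA : ∀ (μ : Measure (EuclideanSpace ℝ (Fin d))), IsProbabilityMeasure μ →
      (∀ᵐ x ∂μ, x ∈ C) →
      Tendsto (fun t : ℝ => ∫ x, (U x + Real.log (κ t x)) ∂μ)
        (nhdsWithin 0 (Set.Ioi 0)) (nhds (∫ x, (U x + Real.log (a x)) ∂μ)) := by
    intro μ hμP hμae
    haveI := hμP
    refine tendsto_integral_filter_of_dominated_convergence (fun _ => K + -Real.log m)
      (Eventually.of_forall fun t => hlogκ_meas t μ) ?_ (integrable_const _) ?_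
    · filter_upwards [hIoo_mem] with t ht
      refine hμae.mono fun x hx => ?_
      have htI : t ∈ Set.Icc (0:ℝ) 1 := ⟨ht.1.le, by linarith [ht.2]⟩
      have h2 : |Real.log (κ t x)| ≤ -Real.log m :=
        abs_log_le_aux hm_pos (hκ_lb t htI x hx) (hκ_ub t htI x)
      calc ‖U x + Real.log (κ t x)‖ ≤ ‖U x‖ + ‖Real.log (κ t x)‖ := norm_add_le _ _
        _ ≤ K + -Real.log m := add_le_add (hKU x hx) (by rwa [Real.norm_eq_abs])
    · refine hμae.mono fun x hx => ?_
      have h1 : Tendsto (fun t : ℝ => κ t x) (nhdsWithin 0 (Set.Ioi 0)) (nhds (a x)) := by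
        have hc : Continuous (fun t : ℝ => κ t x) := by
          simp only [hκ_def]; fun_prop
        have := hc.tendsto 0
        rw [show κ 0 x = a x from hκ0 x] at this
        exact this.mono_left nhdsWithin_le_nhds
      have h2 : ContinuousAt Real.log (a x) := Real.continuousAt_log (ha_pos x hx).ne'
      exact tendsto_const_nhds.add (h2.tendsto.comp h1)
  have hB : Tendsto (fun t : ℝ => ∫ x, (Real.log (κ t x) - Real.log (a x)) / t ∂ρ)
      (nhdsWithin 0 (Set.Ioi 0)) (nhds (∫ x, (b x - a x) / a x ∂ρ)) := by
    refine tendsto_integral_filter_of_dominated_convergence (fun _ => 2 / m)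
      (Eventually.of_forall fun t =>
        (((Real.measurable_log.comp (hκ_cont t).measurable).sub
          (Real.measurable_log.comp ha_cont.measurable)).div_const t).aestronglyMeasurable)
      ?_ (integrable_const _) ?_
    · filter_upwards [hIoo_mem] with t ht
      refine hρ_ae.mono fun x hx => ?_
      have htI : t ∈ Set.Icc (0:ℝ) 1 := ⟨ht.1.le, by linarith [ht.2]⟩
      have h1 : |Real.log (κ t x) - Real.log (a x)| ≤ |κ t x - a x| / m :=
        log_lip_aux hm_pos (hκ_lb t htI x hx) (ha_lb x hx)
      have h2 : κ t x - a x = t * (b x - a x) := by simp only [hκ_def]; ring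
      have h3 : |b x - a x| ≤ 2 := by
        have := ha_nonneg x; have := hb_nonneg x
        have := ha_le x; have := hb_le x
        rw [abs_le]; constructor <;> linarith
      calc ‖(Real.log (κ t x) - Real.log (a x)) / t‖
          = |Real.log (κ t x) - Real.log (a x)| / t := by
            rw [Real.norm_eq_abs, abs_div, abs_of_pos ht.1]
        _ ≤ (|κ t x - a x| / m) / t := by gcongr; exact ht.1.le
        _ = |b x - a x| / m := by
            have htne : t ≠ 0 := ht.1.ne'
            have hmne : m ≠ 0 := hm_pos.ne'
            rw [h2, abs_mul, abs_of_pos ht.1]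
            field_simp
        _ ≤ 2 / m := by gcongr
    · refine hρ_ae.mono fun x hx => ?_
      have hax : a x ≠ 0 := (ha_pos x hx).ne'
      have h0 : HasDerivAt (fun t : ℝ => (1 - t) * a x + t * b x) (b x - a x) 0 := by
        have h01 : HasDerivAt (fun t : ℝ => (1 - t) * a x) (-1 * a x) 0 :=
          (((hasDerivAt_id (0:ℝ)).const_sub 1)).mul_const (a x)
        have h02 : HasDerivAt (fun t : ℝ => t * b x) (1 * b x) 0 :=
          (hasDerivAt_id (0:ℝ)).mul_const (b x)
        have := h01.add h02
        exact this.congr_deriv (by ring)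
      have hf0 : (1 - (0:ℝ)) * a x + 0 * b x ≠ 0 := by
        simpa using hax
      have hder : HasDerivAt (fun t : ℝ => Real.log ((1 - t) * a x + t * b x))
          ((b x - a x) / a x) 0 := by
        have := h0.log hf0
        convert this using 1
        simp
      have hslope := hasDerivAt_iff_tendsto_slope.1 hder
      have hmono : nhdsWithin (0:ℝ) (Set.Ioi 0) ≤ nhdsWithin 0 {(0:ℝ)}ᶜ :=
        nhdsWithin_mono _ fun y hy => by simpa using (ne_of_gt hy)
      refine (hslope.mono_left hmono).congr fun t => ?_
      rw [slope_def_field, sub_zero]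
      simp only [hκ_def]
      norm_num
  -- the first-variation function δ
  have hδ' : ∀ x, δ x = (U x + Real.log (a x)) + ∫ z, φ (x - z) / a z ∂ρ := by
    intro x
    rw [hδ x]
    simp only [ha_eq]
    ring
  -- properties of g x = ∫ φ(x-z)/a z dρ
  have hg_bd_ae : ∀ x, ∀ᵐ z ∂ρ, ‖φ (x - z) / a z‖ ≤ 1 / m := by
    intro x
    refine hρ_ae.mono fun z hz => ?_
    rw [Real.norm_eq_abs, abs_div, abs_of_pos (hφ_pos _), abs_of_pos (ha_pos z hz)]
    exact div_le_div₀ zero_le_one (hφ_le_one _) hm_pos (ha_lb z hz)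
  have hg_cont : Continuous (fun x => ∫ z, φ (x - z) / a z ∂ρ) := by
    refine continuous_of_dominated (bound := fun _ => 1 / m)
      (fun x => ((hslice_meas x).measurable.div ha_cont.measurable).aestronglyMeasurable)
      (fun x => hg_bd_ae x) (integrable_const _)
      (ae_of_all _ fun z => (hφ_cont.comp (continuous_id.sub continuous_const)).div_const _)
  have hg_bd : ∀ x, ‖∫ z, φ (x - z) / a z ∂ρ‖ ≤ 1 / m := fun x => by
    calc ‖∫ z, φ (x - z) / a z ∂ρ‖ ≤ ∫ _, 1 / m ∂ρ :=
          norm_integral_le_of_norm_le (integrable_const _) (hg_bd_ae x)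
      _ = 1 / m := by simp
  have hg_int : ∀ (μ : Measure (EuclideanSpace ℝ (Fin d))), IsProbabilityMeasure μ →
      Integrable (fun x => ∫ z, φ (x - z) / a z ∂ρ) μ := by
    intro μ hμP
    haveI := hμP
    exact (integrable_const (1 / m)).mono' hg_cont.aestronglyMeasurable
      (ae_of_all _ fun x => hg_bd x)
  -- Fubini
  have hfub : ∀ (μ : Measure (EuclideanSpace ℝ (Fin d))), IsProbabilityMeasure μ →
      (∀ᵐ x ∂μ, x ∈ C) →
      ∫ x, (∫ z, φ (x - z) / a z ∂ρ) ∂μ = ∫ z, (∫ x, φ (x - z) ∂μ) / a z ∂ρ := by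
    intro μ hμP hμae
    haveI := hμP
    rw [integral_integral_swap (f := fun x z => φ (x - z) / a z)]
    · exact integral_congr_ae (ae_of_all _ fun z => by simp only [integral_div])
    · refine (integrable_const (1 / m)).mono' ?_ ?_
      · have hc : Continuous (fun p : EuclideanSpace ℝ (Fin d) × EuclideanSpace ℝ (Fin d) =>
            φ (p.1 - p.2)) := hφ_cont.comp (continuous_fst.sub continuous_snd)
        exact (hc.measurable.div (ha_cont.measurable.comp measurable_snd)).aestronglyMeasurable
      · have hprod : ∀ᵐ p : EuclideanSpace ℝ (Fin d) × EuclideanSpace ℝ (Fin d)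
            ∂(μ.prod ρ), p.2 ∈ C := by
          rw [ae_iff]
          have hset : {p : EuclideanSpace ℝ (Fin d) × EuclideanSpace ℝ (Fin d) | ¬ p.2 ∈ C}
              = Set.univ ×ˢ Cᶜ := by
            ext p; simp
          rw [hset, Measure.prod_prod, hρC, mul_zero]
        refine hprod.mono fun p hp => ?_
        rw [Function.uncurry]
        rw [Real.norm_eq_abs, abs_div, abs_of_pos (hφ_pos _), abs_of_pos (ha_pos _ hp)]
        exact div_le_div₀ zero_le_one (hφ_le_one _) hm_pos (ha_lb _ hp)
  -- integrability of ratio functions w.r.t. ρ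
  have hratio_int : ∀ f : EuclideanSpace ℝ (Fin d) → ℝ, Continuous f → (∀ x, 0 ≤ f x) →
      (∀ x, f x ≤ 1) → Integrable (fun z => f z / a z) ρ := by
    intro f hf h0 h1
    refine (integrable_const (1 / m)).mono'
      ((hf.measurable.div ha_cont.measurable).aestronglyMeasurable)
      (hρ_ae.mono fun z hz => ?_)
    rw [Real.norm_eq_abs, abs_div, abs_of_nonneg (h0 z), abs_of_pos (ha_pos z hz)]
    exact div_le_div₀ zero_le_one (h1 z) hm_pos (ha_lb z hz)
  have hba_int : Integrable (fun z => b z / a z) ρ := hratio_int b hb_cont hb_nonneg hb_le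
  have haa_int : Integrable (fun z => a z / a z) ρ := hratio_int a ha_cont ha_nonneg ha_le
  -- compute ∫ g dν and ∫ g dρ
  have hgν : ∫ x, (∫ z, φ (x - z) / a z ∂ρ) ∂ν = ∫ z, b z / a z ∂ρ := by
    rw [hfub ν ‹_› hν_ae]
    refine integral_congr_ae (ae_of_all _ fun z => ?_)
    show (∫ x, φ (x - z) ∂ν) / a z = b z / a z
    have hbz : (∫ x, φ (x - z) ∂ν) = b z := by
      rw [← hb_eq z]
      exact integral_congr_ae (ae_of_all _ fun x => hφ_symm x z)
    rw [hbz]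
  have hgρ : ∫ x, (∫ z, φ (x - z) / a z ∂ρ) ∂ρ = ∫ z, a z / a z ∂ρ := by
    rw [hfub ρ ‹_› hρ_ae]
    refine integral_congr_ae (ae_of_all _ fun z => ?_)
    show (∫ x, φ (x - z) ∂ρ) / a z = a z / a z
    have haz : (∫ x, φ (x - z) ∂ρ) = a z := by
      rw [← ha_eq z]
      exact integral_congr_ae (ae_of_all _ fun x => hφ_symm x z)
    rw [haz]
  have hsub_int : ∫ x, (b x - a x) / a x ∂ρ = (∫ z, b z / a z ∂ρ) - ∫ z, a z / a z ∂ρ := by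
    rw [← integral_sub hba_int haa_int]
    exact integral_congr_ae (ae_of_all _ fun z => by simp only [sub_div])
  -- value of ∫ δ dμ
  have hδint : ∀ (μ : Measure (EuclideanSpace ℝ (Fin d))), IsProbabilityMeasure μ →
      Integrable (fun x => U x + Real.log (a x)) μ →
      ∫ x, δ x ∂μ = (∫ x, (U x + Real.log (a x)) ∂μ) + ∫ x, (∫ z, φ (x - z) / a z ∂ρ) ∂μ := by
    intro μ hμP hint
    haveI := hμP
    have : ∫ x, δ x ∂μ
        = ∫ x, ((U x + Real.log (a x)) + ∫ z, φ (x - z) / a z ∂ρ) ∂μ :=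
      integral_congr_ae (ae_of_all _ fun x => by simp only [hδ' x])
    rw [this, integral_add hint (hg_int μ hμP)]
  -- final value equality
  have hfinal : (∫ x, δ x ∂ν) - ∫ x, δ x ∂ρ
      = (∫ x, (b x - a x) / a x ∂ρ)
        + ((∫ x, (U x + Real.log (a x)) ∂ν) - ∫ x, (U x + Real.log (a x)) ∂ρ) := by
    rw [hδint ν ‹_› hI0ν, hδint ρ ‹_› hI0ρ, hgν, hgρ, hsub_int]
    ring
  rw [hfinal]
  have hG := hB.add ((hA ν ‹_› hν_ae).sub (hA ρ ‹_› hρ_ae))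
  refine hG.congr' ?_
  filter_upwards [hIoo_mem] with t ht
  exact (hmain t ht).symm
end
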